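/- arXiv:2205.00577 — 3 statements merged into one kernel-verified Lean document; each statement's English description precedes it below -/
import Mathlib

section
/- (Lemma B.2, part 3.) Under Assumption 1, there exists a constant C such that for every T ≥ 1 the third moment of the normalized partial sum satisfies |E[S_T³]| ≤ C·T^{−1/2}. -/
open MeasureTheory ProbabilityTheory Filter
open scoped ENNReal NNReal Topology Classical

namespace PanelPaper

/-- The physical-dependence framework: innovations `eps`, an independent copy `eps'`,
and a measurable functional `G` generating the process `Ū_t = G(ε_t, ε_{t-1}, …)`. -/
structure PhysDep {Ω : Type*} [MeasurableSpace Ω] (μ : Measure Ω)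
    (E : Type*) [MeasurableSpace E] where
  eps : ℤ → Ω → E
  eps' : ℤ → Ω → E
  meas_eps : ∀ t, Measurable (eps t)
  meas_eps' : ∀ t, Measurable (eps' t)
  indep : iIndepFun (Sum.elim eps eps') μ
  ident : ∀ i j : ℤ ⊕ ℤ, IdentDistrib (Sum.elim eps eps' i) (Sum.elim eps eps' j) μ μ
  G : (ℕ → E) → ℝ
  meas_G : Measurable G

variable {Ω : Type*} [MeasurableSpace Ω] {μ : Measure Ω}
variable {E : Type*} [MeasurableSpace E]

/-- `Ū_t(ω) = G(n ↦ ε_{t-n}(ω))`. -/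
noncomputable def PhysDep.U (P : PhysDep μ E) (t : ℤ) : Ω → ℝ :=
  fun ω => P.G fun n => P.eps (t - n) ω

/-- The coupled version `Ū*_t`, with `ε_s` replaced by `ε'_s` for `s ≤ 0`. -/
noncomputable def PhysDep.Ustar (P : PhysDep μ E) (t : ℤ) : Ω → ℝ :=
  fun ω => P.G fun n =>
    if 1 ≤ t - (n : ℤ) then P.eps (t - n) ω else P.eps' (t - n) ω

/-- The physical-dependence coefficient `λ_{t,r} = ‖Ū_t − Ū*_t‖_{L^r}` (in `ℝ≥0∞`). -/
noncomputable def PhysDep.lam (P : PhysDep μ E) (t : ℤ) (r : ℝ) : ℝ≥0∞ :=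
  eLpNorm (P.U t - P.Ustar t) (ENNReal.ofReal r) μ

/-- Normalized partial sum `S_T = T^{-1/2} ∑_{t=1}^T Ū_t`. -/
noncomputable def PhysDep.S (P : PhysDep μ E) (T : ℕ) : Ω → ℝ :=
  fun ω => (∑ t ∈ Finset.Icc (1 : ℤ) (T : ℤ), P.U t ω) / Real.sqrt T

/-- Assumption 1: `δ ≥ 4`, centred process in `L^δ`, and `∑ t² λ_{t,δ} < ∞`. -/
structure Assumption1 (P : PhysDep μ E) (δ : ℝ) : Prop where
  hδ : 4 ≤ δ
  mean_zero : ∀ t : ℤ, ∫ ω, P.U t ω ∂μ = 0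
  memLp : ∀ t : ℤ, MemLp (P.U t) (ENNReal.ofReal δ) μ
  memLp_star : ∀ t : ℤ, MemLp (P.Ustar t) (ENNReal.ofReal δ) μ
  summable : ∑' t : ℕ, ((t : ℝ≥0∞)) ^ 2 * P.lam t δ ≠ ∞

/-!
Write `M = ‖Ū_0‖_4` and let `Ū_t^{(m)}` be `Ū_t` with the innovations at times `≤ m` replaced
by the primed copies. Reindexing the i.i.d. family (a shift, or swapping `ε_k ↔ ε'_k` for
`k ≤ 0`) shows that `Ū_t^{(m)}` has the law of `Ū_0` and `‖Ū_t - Ū_t^{(m)}‖_δ = λ_{t-m}`, while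
`Ū_t^{(m)}` is independent of every function of `(ε_k)_{k ≤ m}`.

Expanding the cube, `E[S_T³] = T^{-3/2} ∑_{t,s,r ≤ T} E[Ū_t Ū_s Ū_r]`. For `t ≤ s ≤ r`, the
centred copy `Ū_r^{(s)}` is independent of `Ū_t Ū_s`, so by Hölder
`|E[Ū_t Ū_s Ū_r]| = |E[Ū_t Ū_s (Ū_r - Ū_r^{(s)})]| ≤ M² λ_{r-s}`; coupling at `t` instead, `Ū_t`
is independent of `Ū_s^{(t)} Ū_r^{(t)}`, giving `≤ M² (λ_{s-t} + λ_{r-t})`. Using the first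
bound when `r - s` is the larger gap and the second otherwise, a triple with gaps `a, b` costs
at most `M² (λ_{max(a,b)} + λ_{a+b})`. Summing over the smallest index and the two gaps, each
lag `k` is counted `O(k + 1)` times, so the triple sum is `O(T ∑_k (k + 1) λ_k)`, and this
series converges because `∑_k k² λ_k` does.
-/

end PanelPaper

section General

variable {Ω ι β : Type*} {mΩ : MeasurableSpace Ω} {μ : Measure Ω} [mβ : MeasurableSpace β]

theorem ProbabilityTheory.iIndepFun.identDistrib_precomp [IsProbabilityMeasure μ]
    {X : ι → Ω → β} (hX : ∀ i, Measurable (X i)) (hind : iIndepFun X μ) {f : ι → ι}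
    (hf : f.Injective) (hXf : ∀ i, IdentDistrib (X (f i)) (X i) μ μ) :
    IdentDistrib (fun ω i => X (f i) ω) (fun ω i => X i ω) μ μ where
  aemeasurable_fst := (measurable_pi_lambda _ fun i => hX (f i)).aemeasurable
  aemeasurable_snd := (measurable_pi_lambda _ hX).aemeasurable
  map_eq := by
    rw [(hind.precomp hf).map_fun_eq_infinitePi_map (fun i => hX (f i)),
      hind.map_fun_eq_infinitePi_map hX]
    exact congrArg _ (funext fun i => (hXf i).map_eq)

theorem measurable_biSup_comap_comp {X : ι → Ω → β} {S : Set ι} {κ γ : Type*}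
    [MeasurableSpace γ] {F : (κ → β) → γ} (hF : Measurable F) {idx : κ → ι}
    (hidx : ∀ k, idx k ∈ S) :
    Measurable[⨆ i ∈ S, mβ.comap (X i)] fun ω => F fun k => X (idx k) ω := by
  have hcoord : ∀ k, Measurable[⨆ i ∈ S, mβ.comap (X i)] (X (idx k)) := fun k =>
    measurable_iff_comap_le.2 <|
      le_iSup₂ (f := fun i (_ : i ∈ S) => mβ.comap (X i)) (idx k) (hidx k)
  exact hF.comp (@measurable_pi_lambda _ _ _ (⨆ i ∈ S, mβ.comap (X i)) _ _ hcoord)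

theorem ProbabilityTheory.iIndepFun.indepFun_of_measurable_biSup {X : ι → Ω → β}
    (hX : ∀ i, Measurable (X i)) (hind : iIndepFun X μ) {S T : Set ι} (hST : Disjoint S T)
    {γ γ' : Type*} [MeasurableSpace γ] [MeasurableSpace γ'] {f : Ω → γ} {g : Ω → γ'}
    (hf : Measurable[⨆ i ∈ S, mβ.comap (X i)] f) (hg : Measurable[⨆ i ∈ T, mβ.comap (X i)] g) :
    IndepFun f g μ := by
  rw [IndepFun_iff_Indep]
  have h := indep_iSup_of_disjoint (fun i => (hX i).comap_le) hind hST
  exact indep_of_indep_of_le_left (indep_of_indep_of_le_right h hg.comap_le) hf.comap_le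

instance ENNReal.HolderTriple.instFourFourTwo : ENNReal.HolderTriple 4 4 2 where
  inv_add_inv_eq_inv := by
    rw [← two_mul, show (4 : ℝ≥0∞) = 2 * 2 by norm_num, ENNReal.mul_inv (by simp) (by simp),
      ← mul_assoc, ENNReal.mul_inv_cancel (by simp) (by simp), one_mul]

theorem enorm_integral_mul_mul_le {f g h : Ω → ℝ} (hf : AEStronglyMeasurable f μ)
    (hg : AEStronglyMeasurable g μ) (hh : AEStronglyMeasurable h μ) :
    ‖∫ ω, f ω * g ω * h ω ∂μ‖ₑ ≤ eLpNorm f 4 μ * eLpNorm g 4 μ * eLpNorm h 2 μ := by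
  have hfg := eLpNorm_smul_le_mul_eLpNorm (p := 4) (q := 4) (r := 2) hg hf
  have hfgh := eLpNorm_smul_le_mul_eLpNorm (p := 2) (q := 2) (r := 1) hh (hf.mul hg)
  calc ‖∫ ω, f ω * g ω * h ω ∂μ‖ₑ ≤ ∫⁻ ω, ‖f ω * g ω * h ω‖ₑ ∂μ :=
        enorm_integral_le_lintegral_enorm _
    _ = eLpNorm (f * g * h) 1 μ := eLpNorm_one_eq_lintegral_enorm.symm
    _ ≤ eLpNorm f 4 μ * eLpNorm g 4 μ * eLpNorm h 2 μ := hfgh.trans (mul_le_mul_left hfg _)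

theorem integrable_mul_mul {f g h : Ω → ℝ} (hf : MemLp f 4 μ) (hg : MemLp g 4 μ)
    (hh : MemLp h 2 μ) : Integrable (fun ω => f ω * g ω * h ω) μ :=
  memLp_one_iff_integrable.1 (hh.mul' (r := 1) (hg.mul' (r := 2) hf))

end General

section Counting

theorem Finset.sum_comp_le_sum_mul_of_card_fiber_le {ι κ M : Type*} [CommSemiring M]
    [PartialOrder M] [IsOrderedRing M] [DecidableEq κ] {s : Finset ι} {t : Finset κ}
    {φ : ι → κ} (hφ : ∀ x ∈ s, φ x ∈ t) {c : κ → ℕ}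
    (hc : ∀ y ∈ t, (s.filter fun x => φ x = y).card ≤ c y) {g : κ → M}
    (hg : ∀ y ∈ t, 0 ≤ g y) : ∑ x ∈ s, g (φ x) ≤ ∑ y ∈ t, c y * g y := by
  rw [← Finset.sum_fiberwise_of_maps_to hφ]
  refine Finset.sum_le_sum fun y hy => ?_
  rw [Finset.sum_congr rfl fun x hx => by rw [(Finset.mem_filter.1 hx).2], Finset.sum_const,
    nsmul_eq_mul]
  exact mul_le_mul_of_nonneg_right (Nat.mono_cast (hc y hy)) (hg y hy)

theorem Finset.sum_pow_three {ι R : Type*} [CommSemiring R] (s : Finset ι) (f : ι → R) :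
    (∑ i ∈ s, f i) ^ 3 = ∑ x ∈ s ×ˢ s ×ˢ s, f x.1 * f x.2.1 * f x.2.2 := by
  simp only [Finset.sum_product, ← Finset.mul_sum, ← Finset.sum_mul, pow_three']

theorem sum_range_prod_max_le (T : ℕ) (g : ℕ → ℝ≥0∞) :
    ∑ p ∈ Finset.range T ×ˢ Finset.range T, g (max p.1 p.2)
      ≤ 2 * ∑' k : ℕ, ((k : ℝ≥0∞) + 1) * g k := by
  calc ∑ p ∈ Finset.range T ×ˢ Finset.range T, g (max p.1 p.2)
      ≤ ∑ k ∈ Finset.range T, ((2 * (k + 1) : ℕ) : ℝ≥0∞) * g k := by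
        refine Finset.sum_comp_le_sum_mul_of_card_fiber_le (by simp) (fun k _ => ?_)
          fun _ _ => zero_le
        calc _ ≤ (Finset.range (k + 1) ×ˢ {k} ∪ {k} ×ˢ Finset.range (k + 1)).card := by
              refine Finset.card_le_card fun p hp => ?_
              simp only [Finset.mem_filter, Finset.mem_product, Finset.mem_range,
                Finset.mem_union, Finset.mem_singleton] at hp ⊢
              omega
          _ ≤ 2 * (k + 1) := (Finset.card_union_le _ _).trans (by simp; omega)
    _ ≤ ∑' k : ℕ, ((2 * (k + 1) : ℕ) : ℝ≥0∞) * g k := ENNReal.sum_le_tsum _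
    _ = 2 * ∑' k : ℕ, ((k : ℝ≥0∞) + 1) * g k := by
        rw [← ENNReal.tsum_mul_left]
        push_cast
        simp only [mul_assoc]

theorem sum_range_prod_add_le (T : ℕ) (g : ℕ → ℝ≥0∞) :
    ∑ p ∈ Finset.range T ×ˢ Finset.range T, g (p.1 + p.2)
      ≤ ∑' k : ℕ, ((k : ℝ≥0∞) + 1) * g k := by
  calc ∑ p ∈ Finset.range T ×ˢ Finset.range T, g (p.1 + p.2)
      ≤ ∑ k ∈ Finset.range (2 * T), ((k + 1 : ℕ) : ℝ≥0∞) * g k := by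
        refine Finset.sum_comp_le_sum_mul_of_card_fiber_le
          (fun p hp => by simp only [Finset.mem_product, Finset.mem_range] at hp ⊢; omega)
          (fun k _ => ?_) fun _ _ => zero_le
        calc _ ≤ ((Finset.range (k + 1)).image fun a => (a, k - a)).card := by
              refine Finset.card_le_card fun p hp => ?_
              simp only [Finset.mem_filter, Finset.mem_product, Finset.mem_range] at hp
              exact Finset.mem_image.2 ⟨p.1, Finset.mem_range.2 (by omega), by ext <;> simp; omega⟩
          _ ≤ k + 1 := Finset.card_image_le.trans (by simp)
    _ ≤ ∑' k : ℕ, ((k + 1 : ℕ) : ℝ≥0∞) * g k := ENNReal.sum_le_tsum _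
    _ = ∑' k : ℕ, ((k : ℝ≥0∞) + 1) * g k := by push_cast; rfl

theorem ENNReal.tsum_succ_mul_le (g : ℕ → ℝ≥0∞) :
    ∑' k : ℕ, ((k : ℝ≥0∞) + 1) * g k ≤ g 0 + 2 * ∑' k : ℕ, (k : ℝ≥0∞) ^ 2 * g k := by
  calc ∑' k : ℕ, ((k : ℝ≥0∞) + 1) * g k
      ≤ ∑' k : ℕ, ((if k = 0 then g 0 else 0) + 2 * ((k : ℝ≥0∞) ^ 2 * g k)) := by
        refine ENNReal.tsum_le_tsum fun k => ?_
        rcases Nat.eq_zero_or_pos k with rfl | hk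
        · simp
        · have hcast : ((k : ℝ≥0∞) + 1) ≤ 2 * (k : ℝ≥0∞) ^ 2 := by
            exact_mod_cast (by nlinarith : k + 1 ≤ 2 * k ^ 2)
          rw [if_neg hk.ne', zero_add, ← mul_assoc]
          gcongr
    _ = g 0 + 2 * ∑' k : ℕ, (k : ℝ≥0∞) ^ 2 * g k := by
        rw [ENNReal.tsum_add, tsum_ite_eq, ENNReal.tsum_mul_left]

end Counting

section SortedGaps

def sort3 (x : ℤ × ℤ × ℤ) : ℤ × ℤ × ℤ :=
  (min x.1 (min x.2.1 x.2.2),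
    x.1 + x.2.1 + x.2.2 - min x.1 (min x.2.1 x.2.2) - max x.1 (max x.2.1 x.2.2),
    max x.1 (max x.2.1 x.2.2))

theorem sort3_mem_perms (x : ℤ × ℤ × ℤ) :
    sort3 x ∈ ({(x.1, x.2.1, x.2.2), (x.1, x.2.2, x.2.1), (x.2.1, x.1, x.2.2),
      (x.2.1, x.2.2, x.1), (x.2.2, x.1, x.2.1), (x.2.2, x.2.1, x.1)} : Finset (ℤ × ℤ × ℤ)) := by
  obtain ⟨x₁, x₂, x₃⟩ := x
  simp only [sort3, Finset.mem_insert, Finset.mem_singleton, Prod.mk.injEq]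
  omega

def sortGaps (x : ℤ × ℤ × ℤ) : ℤ × ℕ × ℕ :=
  ((sort3 x).1, ((sort3 x).2.1 - (sort3 x).1).toNat, ((sort3 x).2.2 - (sort3 x).2.1).toNat)

theorem sort3_eq_of_sortGaps_eq {x : ℤ × ℤ × ℤ} {lo : ℤ} {a b : ℕ}
    (h : sortGaps x = (lo, a, b)) : sort3 x = (lo, lo + a, lo + a + b) := by
  obtain ⟨x₁, x₂, x₃⟩ := x
  simp only [sortGaps, sort3, Prod.mk.injEq] at h ⊢
  omega

theorem mul_mul_eq_sort3 {R : Type*} [CommMonoid R] (f : ℤ → R) (x : ℤ × ℤ × ℤ) :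
    f x.1 * f x.2.1 * f x.2.2 = f (sort3 x).1 * f (sort3 x).2.1 * f (sort3 x).2.2 := by
  have hx := sort3_mem_perms x
  simp only [Finset.mem_insert, Finset.mem_singleton] at hx
  rcases hx with h | h | h | h | h | h <;> rw [h] <;> dsimp only <;> ac_rfl

theorem card_filter_sortGaps_eq_le (s : Finset (ℤ × ℤ × ℤ)) (y : ℤ × ℕ × ℕ) :
    (s.filter fun x => sortGaps x = y).card ≤ 6 := by
  obtain ⟨lo, a, b⟩ := y
  calc _ ≤ ({(lo, lo + a, lo + a + b), (lo, lo + a + b, lo + a), (lo + a, lo, lo + a + b),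
        (lo + a + b, lo, lo + a), (lo + a, lo + a + b, lo), (lo + a + b, lo + a, lo)} :
          Finset (ℤ × ℤ × ℤ)).card := by
        refine Finset.card_le_card fun x hx => ?_
        have hsort := sort3_eq_of_sortGaps_eq (Finset.mem_filter.1 hx).2
        have hx := sort3_mem_perms x
        obtain ⟨x₁, x₂, x₃⟩ := x
        simp only [Finset.mem_insert, Finset.mem_singleton] at hx
        rcases hx with h | h | h | h | h | h <;> rw [hsort] at h <;>
          simp only [Prod.mk.injEq] at h <;> obtain ⟨rfl, rfl, rfl⟩ := h <;> simp
    _ ≤ 6 := Finset.card_le_six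

theorem sortGaps_mem_Icc_prod_range {T : ℕ} {x : ℤ × ℤ × ℤ}
    (hx : x ∈ Finset.Icc (1 : ℤ) T ×ˢ Finset.Icc (1 : ℤ) T ×ˢ Finset.Icc (1 : ℤ) T) :
    sortGaps x ∈ Finset.Icc (1 : ℤ) T ×ˢ Finset.range T ×ˢ Finset.range T := by
  obtain ⟨x₁, x₂, x₃⟩ := x
  simp only [Finset.mem_product, Finset.mem_Icc, Finset.mem_range, sortGaps, sort3] at hx ⊢
  omega

end SortedGaps

namespace PanelPaper

def idxU (t : ℤ) (n : ℕ) : ℤ ⊕ ℤ := .inl (t - n)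

def idxCpl (m t : ℤ) (n : ℕ) : ℤ ⊕ ℤ := if m < t - n then .inl (t - n) else .inr (t - n)

def shiftIdx (h : ℤ) : ℤ ⊕ ℤ ≃ ℤ ⊕ ℤ := Equiv.sumCongr (Equiv.addRight h) (Equiv.addRight h)

def swapPast : ℤ ⊕ ℤ → ℤ ⊕ ℤ
  | .inl k => if 0 < k then .inl k else .inr k
  | .inr k => if 0 < k then .inr k else .inl k

theorem shiftIdx_comp_idxU (h t : ℤ) : shiftIdx h ∘ idxU t = idxU (t + h) := by
  funext n
  simp only [Function.comp_apply, idxU, shiftIdx, Equiv.sumCongr_apply, Sum.map_inl,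
    Equiv.coe_addRight]
  congr 1
  ring

theorem shiftIdx_comp_idxCpl (h m t : ℤ) :
    shiftIdx h ∘ idxCpl m t = idxCpl (m + h) (t + h) := by
  funext n
  simp only [Function.comp_apply, idxCpl]
  by_cases hn : m < t - n
  · rw [if_pos hn, if_pos (by omega)]
    simp only [shiftIdx, Equiv.sumCongr_apply, Sum.map_inl, Equiv.coe_addRight]
    congr 1
    ring
  · rw [if_neg hn, if_neg (by omega)]
    simp only [shiftIdx, Equiv.sumCongr_apply, Sum.map_inr, Equiv.coe_addRight]
    congr 1
    ring

theorem swapPast_involutive : Function.Involutive swapPast := by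
  rintro (k | k) <;> by_cases hk : 0 < k <;> simp [swapPast, hk]

theorem swapPast_comp_idxU (t : ℤ) : swapPast ∘ idxU t = idxCpl 0 t := rfl

variable {Ω : Type*} [MeasurableSpace Ω] {μ : Measure Ω} {E : Type*} [MeasurableSpace E]
  (P : PhysDep μ E)

/-- The innovations are indexed by `ℤ ⊕ ℤ`: `inl k` reads `ε_k` and `inr k` reads `ε'_k`. -/
def PhysDep.applyG (idx : ℕ → ℤ ⊕ ℤ) (ω : Ω) : ℝ :=
  P.G fun n => Sum.elim P.eps P.eps' (idx n) ω

/-- `Ū_t` with the innovations at times `≤ m` replaced by their independent copies. -/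
def PhysDep.Ucpl (m t : ℤ) : Ω → ℝ := P.applyG (idxCpl m t)

theorem PhysDep.Ustar_eq_Ucpl (t : ℤ) : P.Ustar t = P.Ucpl 0 t := by
  funext ω
  refine congrArg P.G (funext fun n => ?_)
  simp only [idxCpl]
  split_ifs <;> first | rfl | omega

theorem PhysDep.measurable_elim : ∀ i, Measurable (Sum.elim P.eps P.eps' i)
  | .inl k => P.meas_eps k
  | .inr k => P.meas_eps' k

section Stationarity

variable [IsProbabilityMeasure μ]

theorem PhysDep.identDistrib_applyG_comp {f : ℤ ⊕ ℤ → ℤ ⊕ ℤ} (hf : f.Injective)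
    (idx : ℕ → ℤ ⊕ ℤ) : IdentDistrib (P.applyG (f ∘ idx)) (P.applyG idx) μ μ :=
  (P.indep.identDistrib_precomp P.measurable_elim hf fun _ => P.ident _ _).comp
    (P.meas_G.comp (measurable_pi_lambda _ fun n => measurable_pi_apply (idx n)))

theorem PhysDep.identDistrib_applyG_sub_comp {f : ℤ ⊕ ℤ → ℤ ⊕ ℤ} (hf : f.Injective)
    (idx idx' : ℕ → ℤ ⊕ ℤ) :
    IdentDistrib (P.applyG (f ∘ idx) - P.applyG (f ∘ idx')) (P.applyG idx - P.applyG idx')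
      μ μ := by
  have hψ : Measurable fun x : ℤ ⊕ ℤ → E => P.G (fun n => x (idx n)) - P.G (fun n => x (idx' n)) :=
    (P.meas_G.comp (measurable_pi_lambda _ fun n => measurable_pi_apply (idx n))).sub
      (P.meas_G.comp (measurable_pi_lambda _ fun n => measurable_pi_apply (idx' n)))
  exact (P.indep.identDistrib_precomp P.measurable_elim hf fun _ => P.ident _ _).comp hψ

theorem PhysDep.identDistrib_U (t : ℤ) : IdentDistrib (P.U t) (P.U 0) μ μ := by
  have h := P.identDistrib_applyG_comp (shiftIdx t).injective (idxU 0)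
  rwa [shiftIdx_comp_idxU, zero_add] at h

theorem PhysDep.identDistrib_Ucpl (m t : ℤ) : IdentDistrib (P.Ucpl m t) (P.U 0) μ μ := by
  have hshift := P.identDistrib_applyG_comp (shiftIdx m).injective (idxCpl 0 (t - m))
  rw [shiftIdx_comp_idxCpl, zero_add, sub_add_cancel] at hshift
  have hswap := P.identDistrib_applyG_comp swapPast_involutive.injective (idxU (t - m))
  rw [swapPast_comp_idxU] at hswap
  exact (hshift.trans hswap).trans (P.identDistrib_U (t - m))

theorem PhysDep.identDistrib_sub_Ucpl (m t : ℤ) :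
    IdentDistrib (P.U t - P.Ucpl m t) (P.U (t - m) - P.Ustar (t - m)) μ μ := by
  have h := P.identDistrib_applyG_sub_comp (shiftIdx m).injective (idxU (t - m))
    (idxCpl 0 (t - m))
  rw [shiftIdx_comp_idxU, shiftIdx_comp_idxCpl, zero_add, sub_add_cancel] at h
  rwa [P.Ustar_eq_Ucpl]

end Stationarity

section Independence

def pastIdx (m : ℤ) : Set (ℤ ⊕ ℤ) := Sum.inl '' Set.Iic m

abbrev PhysDep.sigmaOn (S : Set (ℤ ⊕ ℤ)) : MeasurableSpace Ω :=
  ⨆ i ∈ S, MeasurableSpace.comap (Sum.elim P.eps P.eps' i) ‹_›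

theorem PhysDep.measurable_U_past {t m : ℤ} (h : t ≤ m) :
    Measurable[P.sigmaOn (pastIdx m)] (P.U t) :=
  measurable_biSup_comap_comp (X := Sum.elim P.eps P.eps') P.meas_G (idx := idxU t)
    fun n => ⟨t - n, by simp only [Set.mem_Iic]; omega, rfl⟩

theorem PhysDep.measurable_Ucpl_future (m t : ℤ) :
    Measurable[P.sigmaOn (pastIdx m)ᶜ] (P.Ucpl m t) := by
  refine measurable_biSup_comap_comp (X := Sum.elim P.eps P.eps') P.meas_G
    (idx := idxCpl m t) fun n => ?_
  rintro ⟨k, hk, hk'⟩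
  simp only [idxCpl] at hk'
  split_ifs at hk' with h
  simp only [Set.mem_Iic, Sum.inl.injEq] at hk hk'
  omega

theorem PhysDep.indepFun_of_past_future {m : ℤ} {f g : Ω → ℝ}
    (hf : Measurable[P.sigmaOn (pastIdx m)] f) (hg : Measurable[P.sigmaOn (pastIdx m)ᶜ] g) :
    IndepFun f g μ :=
  P.indep.indepFun_of_measurable_biSup P.measurable_elim disjoint_compl_right hf hg

end Independence

section Moments

variable {P} {δ : ℝ}

theorem Assumption1.four_le (hA : Assumption1 P δ) : (4 : ℝ≥0∞) ≤ ENNReal.ofReal δ := by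
  simpa using ENNReal.ofReal_le_ofReal hA.hδ

variable [IsProbabilityMeasure μ]

theorem Assumption1.memLp_U (hA : Assumption1 P δ) {p : ℝ≥0∞} (hp : p ≤ 4) (t : ℤ) :
    MemLp (P.U t) p μ :=
  (hA.memLp t).mono_exponent (hp.trans hA.four_le)

theorem Assumption1.memLp_Ucpl (hA : Assumption1 P δ) {p : ℝ≥0∞} (hp : p ≤ 4) (m t : ℤ) :
    MemLp (P.Ucpl m t) p μ :=
  (P.identDistrib_Ucpl m t).symm.memLp_snd (hA.memLp_U hp 0)

theorem Assumption1.integral_Ucpl (hA : Assumption1 P δ) (m t : ℤ) :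
    ∫ ω, P.Ucpl m t ω ∂μ = 0 :=
  (P.identDistrib_Ucpl m t).integral_eq.trans (hA.mean_zero 0)

theorem Assumption1.eLpNorm_sub_Ucpl_le (hA : Assumption1 P δ) {p : ℝ≥0∞} (hp : p ≤ 4)
    (m t : ℤ) : eLpNorm (P.U t - P.Ucpl m t) p μ ≤ P.lam (t - m) δ :=
  calc eLpNorm (P.U t - P.Ucpl m t) p μ
      ≤ eLpNorm (P.U t - P.Ucpl m t) (ENNReal.ofReal δ) μ :=
        eLpNorm_le_eLpNorm_of_exponent_le (hp.trans hA.four_le)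
          ((hA.memLp_U le_rfl t).sub (hA.memLp_Ucpl le_rfl m t)).1
    _ = P.lam (t - m) δ := (P.identDistrib_sub_Ucpl m t).eLpNorm_eq _

theorem Assumption1.integral_U_mul_U_mul_Ucpl (hA : Assumption1 P δ) {t s : ℤ} (hts : t ≤ s)
    (r : ℤ) : ∫ ω, P.U t ω * P.U s ω * P.Ucpl s r ω ∂μ = 0 := by
  have hind : IndepFun (fun ω => P.U t ω * P.U s ω) (P.Ucpl s r) μ :=
    P.indepFun_of_past_future ((P.measurable_U_past hts).mul (P.measurable_U_past le_rfl))
      (P.measurable_Ucpl_future s r)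
  rw [hind.integral_fun_mul_eq_mul_integral
    ((hA.memLp_U le_rfl t).1.mul (hA.memLp_U le_rfl s).1) (hA.memLp_Ucpl le_rfl s r).1,
    hA.integral_Ucpl, mul_zero]

theorem Assumption1.integral_U_mul_Ucpl_mul_Ucpl (hA : Assumption1 P δ) (t s r : ℤ) :
    ∫ ω, P.U t ω * (P.Ucpl t s ω * P.Ucpl t r ω) ∂μ = 0 := by
  have hind : IndepFun (P.U t) (fun ω => P.Ucpl t s ω * P.Ucpl t r ω) μ :=
    P.indepFun_of_past_future (P.measurable_U_past le_rfl)
      ((P.measurable_Ucpl_future t s).mul (P.measurable_Ucpl_future t r))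
  rw [hind.integral_fun_mul_eq_mul_integral (hA.memLp_U le_rfl t).1
    ((hA.memLp_Ucpl le_rfl t s).1.mul (hA.memLp_Ucpl le_rfl t r).1), hA.mean_zero, zero_mul]

end Moments

/-- The factor `18` is `6` orderings of a triple times the multiplicities `2 (k + 1)` and `k + 1`
of a lag `k` as the larger gap and as the sum of the two gaps. -/
noncomputable def PhysDep.thirdMomentConst (δ : ℝ) : ℝ≥0∞ :=
  18 * eLpNorm (P.U 0) 4 μ ^ 2 * ∑' k : ℕ, ((k : ℝ≥0∞) + 1) * P.lam k δ

theorem PhysDep.sum_lam_max_add_lam_add_le (δ : ℝ) (T : ℕ) :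
    ∑ p ∈ Finset.range T ×ˢ Finset.range T, (P.lam (max p.1 p.2 : ℕ) δ + P.lam (p.1 + p.2 : ℕ) δ)
      ≤ 3 * ∑' k : ℕ, ((k : ℝ≥0∞) + 1) * P.lam k δ := by
  rw [Finset.sum_add_distrib]
  calc _ ≤ 2 * ∑' k : ℕ, ((k : ℝ≥0∞) + 1) * P.lam k δ + ∑' k : ℕ, ((k : ℝ≥0∞) + 1) * P.lam k δ :=
        add_le_add (sum_range_prod_max_le T fun k => P.lam k δ)
          (sum_range_prod_add_le T fun k => P.lam k δ)
    _ = 3 * ∑' k : ℕ, ((k : ℝ≥0∞) + 1) * P.lam k δ := by ring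

section ThirdMoment

variable {P} {δ : ℝ}

theorem Assumption1.tsum_succ_mul_lam_ne_top (hA : Assumption1 P δ) :
    ∑' k : ℕ, ((k : ℝ≥0∞) + 1) * P.lam k δ ≠ ∞ := by
  have hlam0 : P.lam ((0 : ℕ) : ℤ) δ ≠ ∞ := ((hA.memLp 0).sub (hA.memLp_star 0)).eLpNorm_ne_top
  exact ne_top_of_le_ne_top (ENNReal.add_ne_top.2 ⟨hlam0, ENNReal.mul_ne_top (by simp) hA.summable⟩)
    (ENNReal.tsum_succ_mul_le _)

variable [IsProbabilityMeasure μ]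

theorem Assumption1.enorm_integral_mul_mul_sub_Ucpl_le (hA : Assumption1 P δ) {f g : Ω → ℝ}
    (hf : AEStronglyMeasurable f μ) (hg : AEStronglyMeasurable g μ)
    (hfM : eLpNorm f 4 μ = eLpNorm (P.U 0) 4 μ) (hgM : eLpNorm g 4 μ = eLpNorm (P.U 0) 4 μ)
    (m u : ℤ) :
    ‖∫ ω, f ω * g ω * (P.U u - P.Ucpl m u) ω ∂μ‖ₑ
      ≤ eLpNorm (P.U 0) 4 μ ^ 2 * P.lam (u - m) δ := by
  have h24 : (2 : ℝ≥0∞) ≤ 4 := by norm_num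
  refine (enorm_integral_mul_mul_le hf hg
    ((hA.memLp_U h24 u).sub (hA.memLp_Ucpl h24 m u)).1).trans ?_
  rw [hfM, hgM, ← sq]
  exact mul_le_mul_right (hA.eLpNorm_sub_Ucpl_le h24 m u) _

theorem Assumption1.integral_triple_eq_of_le (hA : Assumption1 P δ) {t s : ℤ} (hts : t ≤ s)
    (r : ℤ) : ∫ ω, P.U t ω * P.U s ω * P.U r ω ∂μ
      = ∫ ω, P.U t ω * P.U s ω * (P.U r - P.Ucpl s r) ω ∂μ := by
  have h24 : (2 : ℝ≥0∞) ≤ 4 := by norm_num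
  have hdiff := integrable_mul_mul (hA.memLp_U le_rfl t) (hA.memLp_U le_rfl s)
    ((hA.memLp_U h24 r).sub (hA.memLp_Ucpl h24 s r))
  have hcpl := integrable_mul_mul (hA.memLp_U le_rfl t) (hA.memLp_U le_rfl s)
    (hA.memLp_Ucpl h24 s r)
  calc ∫ ω, P.U t ω * P.U s ω * P.U r ω ∂μ
      = ∫ ω, P.U t ω * P.U s ω * (P.U r - P.Ucpl s r) ω
          + P.U t ω * P.U s ω * P.Ucpl s r ω ∂μ := by
        congr 1
        funext ω
        simp only [Pi.sub_apply]
        ring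
    _ = ∫ ω, P.U t ω * P.U s ω * (P.U r - P.Ucpl s r) ω ∂μ := by
        rw [integral_add hdiff hcpl, hA.integral_U_mul_U_mul_Ucpl hts r, add_zero]

theorem Assumption1.integral_triple_eq (hA : Assumption1 P δ) (t s r : ℤ) :
    ∫ ω, P.U t ω * P.U s ω * P.U r ω ∂μ
      = ∫ ω, P.U t ω * P.U s ω * (P.U r - P.Ucpl t r) ω ∂μ
        + ∫ ω, P.U t ω * P.Ucpl t r ω * (P.U s - P.Ucpl t s) ω ∂μ := by
  have h24 : (2 : ℝ≥0∞) ≤ 4 := by norm_num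
  have hUt := hA.memLp_U le_rfl t
  have hdiff_r := integrable_mul_mul hUt (hA.memLp_U le_rfl s)
    ((hA.memLp_U h24 r).sub (hA.memLp_Ucpl h24 t r))
  have hdiff_s := integrable_mul_mul hUt (hA.memLp_Ucpl le_rfl t r)
    ((hA.memLp_U h24 s).sub (hA.memLp_Ucpl h24 t s))
  have hdiff : Integrable (fun ω => P.U t ω * P.U s ω * (P.U r - P.Ucpl t r) ω
      + P.U t ω * P.Ucpl t r ω * (P.U s - P.Ucpl t s) ω) μ := hdiff_r.add hdiff_s
  have hcpl : Integrable (fun ω => P.U t ω * (P.Ucpl t s ω * P.Ucpl t r ω)) μ := by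
    simpa only [mul_assoc] using
      integrable_mul_mul hUt (hA.memLp_Ucpl le_rfl t s) (hA.memLp_Ucpl h24 t r)
  calc ∫ ω, P.U t ω * P.U s ω * P.U r ω ∂μ
      = ∫ ω, (P.U t ω * P.U s ω * (P.U r - P.Ucpl t r) ω
          + P.U t ω * P.Ucpl t r ω * (P.U s - P.Ucpl t s) ω)
          + P.U t ω * (P.Ucpl t s ω * P.Ucpl t r ω) ∂μ := by
        congr 1
        funext ω
        simp only [Pi.sub_apply]
        ring
    _ = _ := by
        rw [integral_add hdiff hcpl, hA.integral_U_mul_Ucpl_mul_Ucpl, add_zero,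
          integral_add hdiff_r hdiff_s]

theorem Assumption1.enorm_integral_triple_le_of_le (hA : Assumption1 P δ) {t s : ℤ}
    (hts : t ≤ s) (r : ℤ) :
    ‖∫ ω, P.U t ω * P.U s ω * P.U r ω ∂μ‖ₑ ≤ eLpNorm (P.U 0) 4 μ ^ 2 * P.lam (r - s) δ := by
  rw [hA.integral_triple_eq_of_le hts r]
  exact hA.enorm_integral_mul_mul_sub_Ucpl_le (hA.memLp_U le_rfl t).1 (hA.memLp_U le_rfl s).1
    ((P.identDistrib_U t).eLpNorm_eq 4) ((P.identDistrib_U s).eLpNorm_eq 4) s r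

theorem Assumption1.enorm_integral_triple_le_add (hA : Assumption1 P δ) (t s r : ℤ) :
    ‖∫ ω, P.U t ω * P.U s ω * P.U r ω ∂μ‖ₑ
      ≤ eLpNorm (P.U 0) 4 μ ^ 2 * (P.lam (s - t) δ + P.lam (r - t) δ) := by
  rw [hA.integral_triple_eq t s r, mul_add]
  refine (enorm_add_le _ _).trans ((add_le_add ?_ ?_).trans_eq (add_comm _ _))
  · exact hA.enorm_integral_mul_mul_sub_Ucpl_le (hA.memLp_U le_rfl t).1 (hA.memLp_U le_rfl s).1
      ((P.identDistrib_U t).eLpNorm_eq 4) ((P.identDistrib_U s).eLpNorm_eq 4) t r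
  · exact hA.enorm_integral_mul_mul_sub_Ucpl_le (hA.memLp_U le_rfl t).1
      (hA.memLp_Ucpl le_rfl t r).1 ((P.identDistrib_U t).eLpNorm_eq 4)
      ((P.identDistrib_Ucpl t r).eLpNorm_eq 4) t s

theorem Assumption1.enorm_integral_triple_le (hA : Assumption1 P δ) (t : ℤ) (a b : ℕ) :
    ‖∫ ω, P.U t ω * P.U (t + a) ω * P.U (t + a + b) ω ∂μ‖ₑ
      ≤ eLpNorm (P.U 0) 4 μ ^ 2 * (P.lam (max a b : ℕ) δ + P.lam (a + b : ℕ) δ) := by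
  rcases le_total a b with hab | hab
  · refine (hA.enorm_integral_triple_le_of_le (by omega) _).trans (mul_le_mul_right ?_ _)
    rw [max_eq_right hab, show t + a + b - (t + a) = (b : ℤ) by ring]
    exact le_self_add
  · refine (hA.enorm_integral_triple_le_add _ _ _).trans (mul_le_mul_right ?_ _)
    rw [max_eq_left hab, show t + a - t = (a : ℤ) by ring,
      show t + a + b - t = ((a + b : ℕ) : ℤ) by push_cast; ring]

theorem Assumption1.sum_enorm_integral_triple_le (hA : Assumption1 P δ) (T : ℕ) :
    ∑ x ∈ Finset.Icc (1 : ℤ) T ×ˢ Finset.Icc (1 : ℤ) T ×ˢ Finset.Icc (1 : ℤ) T,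
        ‖∫ ω, P.U x.1 ω * P.U x.2.1 ω * P.U x.2.2 ω ∂μ‖ₑ
      ≤ 6 * T * ∑ p ∈ Finset.range T ×ˢ Finset.range T, eLpNorm (P.U 0) 4 μ ^ 2
          * (P.lam (max p.1 p.2 : ℕ) δ + P.lam (p.1 + p.2 : ℕ) δ) := by
  set K : ℕ × ℕ → ℝ≥0∞ := fun p =>
    eLpNorm (P.U 0) 4 μ ^ 2 * (P.lam (max p.1 p.2 : ℕ) δ + P.lam (p.1 + p.2 : ℕ) δ)
  calc _ ≤ ∑ x ∈ Finset.Icc (1 : ℤ) T ×ˢ Finset.Icc (1 : ℤ) T ×ˢ Finset.Icc (1 : ℤ) T,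
          K (sortGaps x).2 := by
        refine Finset.sum_le_sum fun x _ => ?_
        have hprod : ∀ ω, P.U x.1 ω * P.U x.2.1 ω * P.U x.2.2 ω = P.U (sortGaps x).1 ω
            * P.U ((sortGaps x).1 + (sortGaps x).2.1) ω
            * P.U ((sortGaps x).1 + (sortGaps x).2.1 + (sortGaps x).2.2) ω := fun ω => by
          have h := mul_mul_eq_sort3 (P.U · ω) x
          rwa [sort3_eq_of_sortGaps_eq rfl] at h
        simp only [hprod]
        exact hA.enorm_integral_triple_le _ _ _
    _ ≤ ∑ z ∈ Finset.Icc (1 : ℤ) T ×ˢ Finset.range T ×ˢ Finset.range T, (6 : ℕ) * K z.2 :=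
        Finset.sum_comp_le_sum_mul_of_card_fiber_le (c := fun _ => 6) (g := fun z => K z.2)
          (fun _ hx => sortGaps_mem_Icc_prod_range hx)
          (fun y _ => card_filter_sortGaps_eq_le _ y) fun _ _ => zero_le
    _ = 6 * T * ∑ p ∈ Finset.range T ×ˢ Finset.range T, K p := by
        rw [Finset.sum_product]
        simp only [Finset.sum_const, Int.card_Icc, add_sub_cancel_right, Int.toNat_natCast,
          nsmul_eq_mul, Nat.cast_ofNat, ← Finset.mul_sum]
        ring

theorem Assumption1.thirdMomentConst_ne_top (hA : Assumption1 P δ) : P.thirdMomentConst δ ≠ ∞ :=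
  ENNReal.mul_ne_top (ENNReal.mul_ne_top (by simp)
    (ENNReal.pow_ne_top (hA.memLp_U le_rfl 0).eLpNorm_ne_top)) hA.tsum_succ_mul_lam_ne_top

theorem Assumption1.enorm_sum_integral_triple_le (hA : Assumption1 P δ) (T : ℕ) :
    ‖∑ x ∈ Finset.Icc (1 : ℤ) T ×ˢ Finset.Icc (1 : ℤ) T ×ˢ Finset.Icc (1 : ℤ) T,
      ∫ ω, P.U x.1 ω * P.U x.2.1 ω * P.U x.2.2 ω ∂μ‖ₑ ≤ T * P.thirdMomentConst δ :=
  calc _ ≤ _ := enorm_sum_le _ _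
    _ ≤ _ := hA.sum_enorm_integral_triple_le T
    _ ≤ 6 * T * (eLpNorm (P.U 0) 4 μ ^ 2 * (3 * ∑' k : ℕ, ((k : ℝ≥0∞) + 1) * P.lam k δ)) := by
        rw [← Finset.mul_sum]
        gcongr
        exact P.sum_lam_max_add_lam_add_le δ T
    _ = T * P.thirdMomentConst δ := by
        rw [PhysDep.thirdMomentConst]
        ring

theorem Assumption1.integral_S_pow_three (hA : Assumption1 P δ) (T : ℕ) :
    ∫ ω, P.S T ω ^ 3 ∂μ
      = (∑ x ∈ Finset.Icc (1 : ℤ) T ×ˢ Finset.Icc (1 : ℤ) T ×ˢ Finset.Icc (1 : ℤ) T,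
          ∫ ω, P.U x.1 ω * P.U x.2.1 ω * P.U x.2.2 ω ∂μ) / Real.sqrt T ^ 3 := by
  simp only [PhysDep.S, div_pow, Finset.sum_pow_three]
  rw [integral_div, integral_finsetSum _ fun x _ => integrable_mul_mul (hA.memLp_U le_rfl _)
    (hA.memLp_U le_rfl _) (hA.memLp_U (by norm_num) _)]

theorem Assumption1.abs_integral_S_pow_three_le (hA : Assumption1 P δ) {T : ℕ} (hT : 0 < T) :
    |∫ ω, P.S T ω ^ 3 ∂μ| ≤ (P.thirdMomentConst δ).toReal / Real.sqrt T := by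
  have hT' : (0 : ℝ) < T := by exact_mod_cast hT
  have habs : |∑ x ∈ Finset.Icc (1 : ℤ) T ×ˢ Finset.Icc (1 : ℤ) T ×ˢ Finset.Icc (1 : ℤ) T,
      ∫ ω, P.U x.1 ω * P.U x.2.1 ω * P.U x.2.2 ω ∂μ| ≤ (T * P.thirdMomentConst δ).toReal := by
    rw [← Real.norm_eq_abs, ← toReal_enorm]
    exact ENNReal.toReal_mono (ENNReal.mul_ne_top (by simp) hA.thirdMomentConst_ne_top)
      (hA.enorm_sum_integral_triple_le T)
  have hsqrt : Real.sqrt T ^ 3 = T * Real.sqrt T := by rw [pow_succ, Real.sq_sqrt hT'.le]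
  have hpos : (0 : ℝ) < T * Real.sqrt T := mul_pos hT' (Real.sqrt_pos.2 hT')
  rw [hA.integral_S_pow_three, abs_div, hsqrt, abs_of_pos hpos]
  calc _ ≤ (T * P.thirdMomentConst δ).toReal / (T * Real.sqrt T) := by gcongr
    _ = (P.thirdMomentConst δ).toReal / Real.sqrt T := by
        rw [ENNReal.toReal_mul, ENNReal.toReal_natCast, mul_div_mul_left _ _ hT'.ne']

end ThirdMoment

/-- Lemma B.2, part 3: `|E[S_T³]| ≤ C T^{−1/2}` for all `T ≥ 1`. -/
theorem statement13 {Ω : Type*} [MeasurableSpace Ω] {μ : Measure Ω} [IsProbabilityMeasure μ]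
    {E : Type*} [MeasurableSpace E] (P : PhysDep μ E) {δ : ℝ}
    (hA : Assumption1 P δ) :
    ∃ C : ℝ, 0 < C ∧ ∀ T : ℕ, 1 ≤ T →
      |∫ ω, (P.S T ω) ^ 3 ∂μ| ≤ C / Real.sqrt T := by
  refine ⟨(P.thirdMomentConst δ).toReal + 1, by positivity, fun T hT => ?_⟩
  calc |∫ ω, (P.S T ω) ^ 3 ∂μ| ≤ (P.thirdMomentConst δ).toReal / Real.sqrt T :=
        hA.abs_integral_S_pow_three_le hT
    _ ≤ ((P.thirdMomentConst δ).toReal + 1) / Real.sqrt T := by gcongr; linarith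

end PanelPaper
end

section
/- (Example 1, part 1: a linear (MA(∞)) panel process satisfies Assumption 1 with geometric rate.) Assume only the operator-norm condition ‖B^{(N)}_j‖ ≤ C₀ρ^j and E|ε₁₁|⁴ < ∞. Let Ū*^{(N)}_t denote the coupled version of Ū^{(N)}_t obtained by replacing ε^{(N)}_s with ε'^{(N)}_s for all s ≤ 0, where (ε'^{(N)}_t) is an independent copy of (ε^{(N)}_t). Then there exists a constant C, depending only on C₀, ρ and the second and fourth moments of ε₁₁ (and not on N or t), such that for all N ≥ 1 and all t ≥ 0: ‖Ū^{(N)}_t − Ū*^{(N)}_t‖_{L⁴} ≤ C·ρ^t. Consequently ∑_{t=0}^∞ t² ‖Ū^{(N)}_t − Ū*^{(N)}_t‖_{L⁴} < ∞ uniformly in N, i.e., Assumption 1 holds with δ = 4. -/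
/-
The two processes share the innovations `ε_s`, `s ≥ 1`, so only the lags `j ≥ t` survive in
`Ū_t - Ū*_t = ∑_{j ≥ t} N^{-1/2} (1ᵀ B_j) (ε_{t-j} - ε'_{t-j})`. Each summand is a difference of
two weighted sums `∑_k w_k ε_k` of i.i.d. centred variables with `‖w‖₂ ≤ ‖B_j‖`, since
`‖B_jᵀ 1‖₂ ≤ ‖B_j‖ √N`. Expanding the fourth power and using independence gives
`E (∑_k w_k ε_k)⁴ ≤ 3 E ε⁴ (∑_k w_k²)²`, so the summand has `L⁴` norm at most
`2 (3 E ε⁴)^{1/4} C₀ ρ^j`. Minkowski's inequality and Fatou's lemma bound the `L⁴` norm of the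
series by this geometric tail, which is `O(ρ^t)`.
-/

open MeasureTheory ProbabilityTheory Filter
open scoped ENNReal NNReal Topology Classical

namespace PanelPaper

variable {Ω : Type*} [MeasurableSpace Ω]

/-- Coordinate `u_{it}` of the linear (MA(∞)) panel process `U_t = ∑_j B_j ε_{t−j}`. -/
noncomputable def uCoord (ε : (N : ℕ) → ℤ → Ω → Fin N → ℝ)
    (B : (N : ℕ) → ℕ → Matrix (Fin N) (Fin N) ℝ)
    (N : ℕ) (t : ℤ) (ω : Ω) (i : Fin N) : ℝ :=
  ∑' j : ℕ, (B N j).mulVec (ε N (t - (j : ℤ)) ω) i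

/-- Cross-sectional average `Ū_t = N^{-1/2} ∑_i u_{it}`. -/
noncomputable def UbarLin (ε : (N : ℕ) → ℤ → Ω → Fin N → ℝ)
    (B : (N : ℕ) → ℕ → Matrix (Fin N) (Fin N) ℝ)
    (N : ℕ) (t : ℤ) (ω : Ω) : ℝ :=
  (∑ i : Fin N, uCoord ε B N t ω i) / Real.sqrt N

/-- `S_{N,T} = T^{-1/2} ∑_{t=1}^T Ū_t`. -/
noncomputable def SLin (ε : (N : ℕ) → ℤ → Ω → Fin N → ℝ)
    (B : (N : ℕ) → ℕ → Matrix (Fin N) (Fin N) ℝ)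
    (N T : ℕ) (ω : Ω) : ℝ :=
  (∑ t ∈ Finset.Icc (1 : ℤ) (T : ℤ), UbarLin ε B N t ω) / Real.sqrt T

/-- Operator (spectral) norm of a square real matrix. -/
noncomputable def opNorm {N : ℕ} (A : Matrix (Fin N) (Fin N) ℝ) : ℝ :=
  ‖Matrix.toEuclideanCLM (𝕜 := ℝ) A‖

/-- Coordinate of the coupled process: `ε_s` is replaced by `ε'_s` for `s ≤ 0`. -/
noncomputable def uCoordStar (ε ε' : (N : ℕ) → ℤ → Ω → Fin N → ℝ)
    (B : (N : ℕ) → ℕ → Matrix (Fin N) (Fin N) ℝ)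
    (N : ℕ) (t : ℤ) (ω : Ω) (i : Fin N) : ℝ :=
  ∑' j : ℕ, (B N j).mulVec
    (fun l => if 1 ≤ t - (j : ℤ) then ε N (t - (j : ℤ)) ω l else ε' N (t - (j : ℤ)) ω l) i

/-- Cross-sectional average of the coupled process. -/
noncomputable def UbarLinStar (ε ε' : (N : ℕ) → ℤ → Ω → Fin N → ℝ)
    (B : (N : ℕ) → ℕ → Matrix (Fin N) (Fin N) ℝ)
    (N : ℕ) (t : ℤ) (ω : Ω) : ℝ :=
  (∑ i : Fin N, uCoordStar ε ε' B N t ω i) / Real.sqrt N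

open Finset
open scoped Matrix

section Moments

variable {μ : Measure Ω}

theorem integrable_pow_of_memLp [IsFiniteMeasure μ] {f : Ω → ℝ} {n k : ℕ} (hf : MemLp f n μ)
    (hk : k ≤ n) : Integrable (fun ω => f ω ^ k) μ := by
  have hk' : MemLp f k μ := hf.mono_exponent (by exact_mod_cast hk)
  refine (integrable_norm_iff (hf.aestronglyMeasurable.pow k)).1 ?_
  simpa only [Pi.pow_apply, norm_pow] using hk'.integrable_norm_pow'

theorem integral_add_pow_of_indepFun [IsProbabilityMeasure μ] {T Y : Ω → ℝ} {n : ℕ}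
    (hTY : IndepFun T Y μ) (hT : MemLp T n μ) (hY : MemLp Y n μ) :
    ∫ ω, (T ω + Y ω) ^ n ∂μ =
      ∑ k ∈ range (n + 1), (∫ ω, T ω ^ k ∂μ) * (∫ ω, Y ω ^ (n - k) ∂μ) * n.choose k := by
  have hpow (k : ℕ) : IndepFun (fun ω => T ω ^ k) (fun ω => Y ω ^ (n - k)) μ :=
    hTY.comp (measurable_id.pow_const k) (measurable_id.pow_const (n - k))
  simp_rw [add_pow]
  rw [integral_finsetSum]
  · refine sum_congr rfl fun k _ => ?_
    rw [integral_mul_const, (hpow k).integral_fun_mul_eq_mul_integral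
      (hT.aestronglyMeasurable.pow k) (hY.aestronglyMeasurable.pow (n - k))]
  · intro k hk
    have hk : k ≤ n := Nat.lt_succ_iff.1 (mem_range.1 hk)
    exact ((hpow k).integrable_mul (integrable_pow_of_memLp hT hk)
      (integrable_pow_of_memLp hY (Nat.sub_le n k))).mul_const _

theorem integral_add_sq_of_indepFun [IsProbabilityMeasure μ] {T Y : Ω → ℝ}
    (hTY : IndepFun T Y μ) (hT : MemLp T 2 μ) (hY : MemLp Y 2 μ)
    (hT0 : ∫ ω, T ω ∂μ = 0) (hY0 : ∫ ω, Y ω ∂μ = 0) :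
    ∫ ω, (T ω + Y ω) ^ 2 ∂μ = ∫ ω, T ω ^ 2 ∂μ + ∫ ω, Y ω ^ 2 ∂μ := by
  rw [integral_add_pow_of_indepFun hTY (by exact_mod_cast hT) (by exact_mod_cast hY)]
  simp [sum_range_succ, hT0, hY0, add_comm]

theorem integral_add_pow_four_of_indepFun [IsProbabilityMeasure μ] {T Y : Ω → ℝ}
    (hTY : IndepFun T Y μ) (hT : MemLp T 4 μ) (hY : MemLp Y 4 μ)
    (hT0 : ∫ ω, T ω ∂μ = 0) (hY0 : ∫ ω, Y ω ∂μ = 0) :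
    ∫ ω, (T ω + Y ω) ^ 4 ∂μ =
      ∫ ω, T ω ^ 4 ∂μ + 6 * (∫ ω, T ω ^ 2 ∂μ) * (∫ ω, Y ω ^ 2 ∂μ) + ∫ ω, Y ω ^ 4 ∂μ := by
  rw [integral_add_pow_of_indepFun hTY (by exact_mod_cast hT) (by exact_mod_cast hY)]
  simp only [Nat.reduceAdd, sum_range_succ, range_one, sum_singleton, pow_zero, integral_const,
    probReal_univ, smul_eq_mul, mul_one, tsub_zero, one_mul, Nat.choose, Nat.cast_one, pow_one,
    hT0, Nat.add_one_sub_one, zero_mul, add_zero, Nat.cast_ofNat, Nat.reduceSub, hY0, mul_zero,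
    tsub_self]
  ring

theorem integral_add_sq_le_and_pow_four_le_of_indepFun [IsProbabilityMeasure μ] {T Y : Ω → ℝ}
    (hTY : IndepFun T Y μ) (hT : MemLp T 4 μ) (hY : MemLp Y 4 μ)
    (hT0 : ∫ ω, T ω ∂μ = 0) (hY0 : ∫ ω, Y ω ∂μ = 0) {a b s m : ℝ} (ha : 0 ≤ a) (hb : 0 ≤ b)
    (hsm : s ^ 2 ≤ m) (hT2 : ∫ ω, T ω ^ 2 ∂μ ≤ a * s) (hT4 : ∫ ω, T ω ^ 4 ∂μ ≤ 3 * m * a ^ 2)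
    (hY2 : ∫ ω, Y ω ^ 2 ∂μ ≤ b * s) (hY4 : ∫ ω, Y ω ^ 4 ∂μ ≤ 3 * m * b ^ 2) :
    ∫ ω, (T ω + Y ω) ^ 2 ∂μ ≤ (a + b) * s ∧
      ∫ ω, (T ω + Y ω) ^ 4 ∂μ ≤ 3 * m * (a + b) ^ 2 := by
  have hT2nn : 0 ≤ ∫ ω, T ω ^ 2 ∂μ := integral_nonneg fun ω => sq_nonneg _
  have hY2nn : 0 ≤ ∫ ω, Y ω ^ 2 ∂μ := integral_nonneg fun ω => sq_nonneg _
  have hcross : (∫ ω, T ω ^ 2 ∂μ) * ∫ ω, Y ω ^ 2 ∂μ ≤ a * b * m :=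
    calc _ ≤ (a * s) * (b * s) := mul_le_mul hT2 hY2 hY2nn (hT2nn.trans hT2)
      _ = a * b * s ^ 2 := by ring
      _ ≤ a * b * m := mul_le_mul_of_nonneg_left hsm (mul_nonneg ha hb)
  constructor
  · rw [integral_add_sq_of_indepFun hTY (hT.mono_exponent (by norm_num))
      (hY.mono_exponent (by norm_num)) hT0 hY0]
    linarith
  · rw [integral_add_pow_four_of_indepFun hTY hT hY hT0 hY0]
    nlinarith

theorem integral_weighted_sum_pow_four_le [IsProbabilityMeasure μ] {ι : Type*} {X : ι → Ω → ℝ}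
    (hX : iIndepFun X μ) (hXm : ∀ i, Measurable (X i)) (hX4 : ∀ i, MemLp (X i) 4 μ)
    (hX0 : ∀ i, ∫ ω, X i ω ∂μ = 0) {s m : ℝ} (h2 : ∀ i, ∫ ω, X i ω ^ 2 ∂μ ≤ s)
    (h4 : ∀ i, ∫ ω, X i ω ^ 4 ∂μ ≤ m) (hsm : s ^ 2 ≤ m) (w : ι → ℝ) (S : Finset ι) :
    ∫ ω, (∑ i ∈ S, w i * X i ω) ^ 4 ∂μ ≤ 3 * m * (∑ i ∈ S, w i ^ 2) ^ 2 := by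
  classical
  have hm : 0 ≤ m := (sq_nonneg s).trans hsm
  have hY : iIndepFun (fun i ω => w i * X i ω) μ :=
    hX.comp (fun i x => w i * x) fun i => measurable_const_mul (w i)
  have hY4 (i : ι) : MemLp (fun ω => w i * X i ω) 4 μ := (hX4 i).const_mul (w i)
  have hY0 (i : ι) : ∫ ω, w i * X i ω ∂μ = 0 := by rw [integral_const_mul, hX0, mul_zero]
  have hY2 (i : ι) : ∫ ω, (w i * X i ω) ^ 2 ∂μ ≤ w i ^ 2 * s := by
    simp_rw [mul_pow]
    rw [integral_const_mul]
    exact mul_le_mul_of_nonneg_left (h2 i) (sq_nonneg _)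
  have hY4' (i : ι) : ∫ ω, (w i * X i ω) ^ 4 ∂μ ≤ 3 * m * (w i ^ 2) ^ 2 := by
    simp_rw [mul_pow]
    rw [integral_const_mul]
    have hw4 : 0 ≤ w i ^ 4 := by positivity
    nlinarith [mul_le_mul_of_nonneg_left (h4 i) hw4, mul_nonneg hm hw4]
  suffices ∫ ω, (∑ i ∈ S, w i * X i ω) ^ 2 ∂μ ≤ (∑ i ∈ S, w i ^ 2) * s ∧
      ∫ ω, (∑ i ∈ S, w i * X i ω) ^ 4 ∂μ ≤ 3 * m * (∑ i ∈ S, w i ^ 2) ^ 2 from this.2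
  induction S using Finset.induction_on with
  | empty => simp
  | insert a S ha ih =>
    have hind : IndepFun (fun ω => w a * X a ω) (fun ω => ∑ i ∈ S, w i * X i ω) μ := by
      simpa only [sum_fn] using (hY.indepFun_finsetSum_of_notMem (fun i => (hXm i).const_mul _)
        ha).symm
    have hT0 : ∫ ω, ∑ i ∈ S, w i * X i ω ∂μ = 0 := by
      rw [integral_finsetSum S fun i _ => (hY4 i).integrable (by norm_num)]
      exact sum_eq_zero fun i _ => hY0 i
    simp only [sum_insert ha]
    exact integral_add_sq_le_and_pow_four_le_of_indepFun hind (hY4 a)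
      (memLp_finsetSum S fun i _ => hY4 i) (hY0 a) hT0 (sq_nonneg _)
      (sum_nonneg fun i _ => sq_nonneg _) hsm (hY2 a) (hY4' a) ih.1 ih.2

theorem sq_integral_sq_le_integral_pow_four [IsProbabilityMeasure μ] {f : Ω → ℝ}
    (hf : MemLp f 4 μ) : (∫ ω, f ω ^ 2 ∂μ) ^ 2 ≤ ∫ ω, f ω ^ 4 ∂μ := by
  have hjensen := (even_two.convexOn_pow (𝕜 := ℝ)).map_integral_le (continuous_pow 2).continuousOn
    isClosed_univ (by simp)
    (integrable_pow_of_memLp (n := 4) (k := 2) (by exact_mod_cast hf) (by norm_num))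
    (by simpa only [Function.comp_def, ← pow_mul, Nat.reduceMul] using
      integrable_pow_of_memLp (n := 4) (by exact_mod_cast hf) le_rfl)
  simpa only [← pow_mul, Nat.reduceMul] using hjensen

theorem eLpNorm_le_of_integral_pow_four_le {f : Ω → ℝ} (hf : MemLp f 4 μ) {c : ℝ} (hc : 0 ≤ c)
    (h : ∫ ω, f ω ^ 4 ∂μ ≤ c ^ 4) : eLpNorm f 4 μ ≤ ENNReal.ofReal c := by
  rw [hf.eLpNorm_eq_integral_rpow_norm (by norm_num) (by norm_num)]
  refine ENNReal.ofReal_le_ofReal ?_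
  have h4 : (4 : ℝ≥0∞).toReal = ((4 : ℕ) : ℝ) := by norm_num
  simp_rw [h4, Real.rpow_natCast, Real.norm_eq_abs, (by decide : Even 4).pow_abs]
  calc (∫ ω, f ω ^ 4 ∂μ) ^ ((4 : ℕ) : ℝ)⁻¹ ≤ (c ^ 4) ^ ((4 : ℕ) : ℝ)⁻¹ :=
        Real.rpow_le_rpow (integral_nonneg fun ω => by positivity) h (by positivity)
    _ = c := Real.pow_rpow_inv_natCast hc (by norm_num)

noncomputable def fourthMomentConst (ν : Measure ℝ) : ℝ :=
  (3 * ∫ x, x ^ 4 ∂ν) ^ (4⁻¹ : ℝ)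

theorem fourthMomentConst_nonneg (ν : Measure ℝ) : 0 ≤ fourthMomentConst ν :=
  Real.rpow_nonneg (mul_nonneg (by norm_num) (integral_nonneg fun x => by positivity)) _

theorem eLpNorm_weighted_sum_le [IsProbabilityMeasure μ] {ν : Measure ℝ} [IsProbabilityMeasure ν]
    {ι : Type*} [Fintype ι] {X : ι → Ω → ℝ} (hX : iIndepFun X μ) (hXm : ∀ i, Measurable (X i))
    (hlaw : ∀ i, μ.map (X i) = ν) (hmean : ∫ x, x ∂ν = 0) (hmom4 : MemLp id 4 ν)
    (w : ι → ℝ) {a : ℝ} (ha : 0 ≤ a) (hw : ∑ i, w i ^ 2 ≤ a ^ 2) :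
    eLpNorm (fun ω => ∑ i, w i * X i ω) 4 μ
      ≤ ENNReal.ofReal (fourthMomentConst ν * a) := by
  have hid (i : ι) : IdentDistrib (X i) id μ ν :=
    ⟨(hXm i).aemeasurable, aemeasurable_id, by rw [hlaw i, Measure.map_id]⟩
  have hX4 (i : ι) : MemLp (X i) 4 μ := (hid i).memLp_iff.2 hmom4
  have hmoment (i : ι) (k : ℕ) : ∫ ω, X i ω ^ k ∂μ = ∫ x, x ^ k ∂ν :=
    ((hid i).comp (measurable_id.pow_const k)).integral_eq
  have hm : 0 ≤ 3 * ∫ x, x ^ 4 ∂ν :=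
    mul_nonneg (by norm_num) (integral_nonneg fun x => by positivity)
  refine eLpNorm_le_of_integral_pow_four_le (memLp_finsetSum _ fun i _ => (hX4 i).const_mul (w i))
    (mul_nonneg (fourthMomentConst_nonneg ν) ha) ?_
  calc ∫ ω, (∑ i, w i * X i ω) ^ 4 ∂μ ≤ 3 * (∫ x, x ^ 4 ∂ν) * (∑ i, w i ^ 2) ^ 2 :=
        integral_weighted_sum_pow_four_le hX hXm hX4
          (fun i => (hid i).integral_eq.trans hmean)
          (fun i => (hmoment i 2).le) (fun i => (hmoment i 4).le)
          (sq_integral_sq_le_integral_pow_four (f := id) hmom4) w univ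
    _ ≤ 3 * (∫ x, x ^ 4 ∂ν) * (a ^ 2) ^ 2 := by
        gcongr
    _ = (fourthMomentConst ν * a) ^ 4 := by
        have hK : fourthMomentConst ν ^ 4 = 3 * ∫ x, x ^ 4 ∂ν := by
          rw [fourthMomentConst]
          simpa using Real.rpow_inv_natCast_pow hm (n := 4) (by norm_num)
        rw [mul_pow, hK]
        ring

theorem eLpNorm_dotProduct_sub_le [IsProbabilityMeasure μ] {ν : Measure ℝ} [IsProbabilityMeasure ν]
    {ι : Type*} [Fintype ι] {Z Z' : Ω → ι → ℝ} (hZ : iIndepFun (fun i ω => Z ω i) μ)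
    (hZ' : iIndepFun (fun i ω => Z' ω i) μ) (hZm : Measurable Z) (hZm' : Measurable Z')
    (hlaw : ∀ i, μ.map (fun ω => Z ω i) = ν) (hlaw' : ∀ i, μ.map (fun ω => Z' ω i) = ν)
    (hmean : ∫ x, x ∂ν = 0) (hmom4 : MemLp id 4 ν) (v : ι → ℝ) {a : ℝ} (ha : 0 ≤ a)
    (hv : ∑ i, v i ^ 2 ≤ a ^ 2) :
    eLpNorm (fun ω => v ⬝ᵥ (Z ω - Z' ω)) 4 μ
      ≤ ENNReal.ofReal (2 * (fourthMomentConst ν * a)) := by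
  have hsplit : (fun ω => v ⬝ᵥ (Z ω - Z' ω))
      = (fun ω => ∑ i, v i * Z ω i) - fun ω => ∑ i, v i * Z' ω i := by
    funext ω
    simp only [dotProduct, Pi.sub_apply, mul_sub, sum_sub_distrib]
  have hZi : ∀ i, Measurable fun ω => Z ω i := fun i => (measurable_pi_apply i).comp hZm
  have hZi' : ∀ i, Measurable fun ω => Z' ω i := fun i => (measurable_pi_apply i).comp hZm'
  have hc := mul_nonneg (fourthMomentConst_nonneg ν) ha
  rw [hsplit, two_mul, ENNReal.ofReal_add hc hc]
  refine (eLpNorm_sub_le ?_ ?_ (by norm_num)).trans (add_le_add ?_ ?_)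
  · exact (Finset.measurable_sum _ fun i _ => (hZi i).const_mul _).aestronglyMeasurable
  · exact (Finset.measurable_sum _ fun i _ => (hZi' i).const_mul _).aestronglyMeasurable
  · exact eLpNorm_weighted_sum_le hZ hZi hlaw hmean hmom4 v ha hv
  · exact eLpNorm_weighted_sum_le hZ' hZi' hlaw' hmean hmom4 v ha hv

end Moments

section Series

variable {α E : Type*} [MeasurableSpace α] {μ : Measure α} [NormedAddCommGroup E]

theorem eLpNorm_le_tsum_of_hasSum {p : ℝ≥0∞} (hp : 1 ≤ p) {f : ℕ → α → E} {g : α → E}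
    (hf : ∀ n, AEStronglyMeasurable (f n) μ) (hg : ∀ᵐ x ∂μ, HasSum (fun n => f n x) (g x)) :
    eLpNorm g p μ ≤ ∑' n, eLpNorm (f n) p μ := by
  have hpartial (n : ℕ) : eLpNorm (∑ i ∈ range n, f i) p μ ≤ ∑' n, eLpNorm (f n) p μ :=
    (eLpNorm_sum_le (fun i _ => hf i) hp).trans (ENNReal.sum_le_tsum _)
  calc eLpNorm g p μ ≤ atTop.liminf fun n => eLpNorm (∑ i ∈ range n, f i) p μ := by
        refine Lp.eLpNorm_lim_le_liminf_eLpNorm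
          (fun n => aestronglyMeasurable_sum _ fun i _ => hf i) g ?_
        filter_upwards [hg] with x hx
        simpa only [Finset.sum_apply] using hx.tendsto_sum_nat
    _ ≤ ∑' n, eLpNorm (f n) p μ :=
        liminf_le_of_frequently_le' (Frequently.of_forall hpartial)

end Series

theorem tsum_ofReal_mul_pow_add {c ρ : ℝ} (hc : 0 ≤ c) (hρ0 : 0 ≤ ρ) (hρ1 : ρ < 1) (t : ℕ) :
    ∑' k : ℕ, ENNReal.ofReal (c * ρ ^ (k + t)) = ENNReal.ofReal (c / (1 - ρ) * ρ ^ t) := by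
  have hgeom : HasSum (fun k : ℕ => c * ρ ^ (k + t)) (c / (1 - ρ) * ρ ^ t) := by
    have h := (hasSum_geometric_of_lt_one hρ0 hρ1).mul_left (c * ρ ^ t)
    rw [show c * ρ ^ t * (1 - ρ)⁻¹ = c / (1 - ρ) * ρ ^ t by ring] at h
    exact h.congr_fun fun k => by ring
  rw [← ENNReal.ofReal_tsum_of_nonneg (fun k => by positivity) hgeom.summable, hgeom.tsum_eq]

theorem tsum_sq_mul_le_of_le_geometric {a : ℕ → ℝ≥0∞} {C ρ : ℝ} (hC : 0 ≤ C) (hρ0 : 0 ≤ ρ)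
    (hρ1 : ρ < 1) (ha : ∀ t, a t ≤ ENNReal.ofReal (C * ρ ^ t)) :
    ∑' t : ℕ, (t : ℝ≥0∞) ^ 2 * a t ≤ ENNReal.ofReal (∑' t : ℕ, (t : ℝ) ^ 2 * (C * ρ ^ t)) := by
  have hsummable : Summable fun t : ℕ => (t : ℝ) ^ 2 * (C * ρ ^ t) :=
    ((summable_pow_mul_geometric_of_norm_lt_one 2
      (by rwa [Real.norm_eq_abs, abs_of_nonneg hρ0])).mul_left C).congr fun t => by ring
  rw [ENNReal.ofReal_tsum_of_nonneg (fun t => by positivity) hsummable]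
  refine ENNReal.tsum_le_tsum fun t => ?_
  rw [ENNReal.ofReal_mul (by positivity), ENNReal.ofReal_pow (Nat.cast_nonneg t),
    ENNReal.ofReal_natCast]
  gcongr
  exact ha t

theorem opNorm_nonneg {N : ℕ} (A : Matrix (Fin N) (Fin N) ℝ) : 0 ≤ opNorm A :=
  norm_nonneg _

open scoped Matrix.Norms.L2Operator in
theorem sum_sq_smul_vecMul_one_le {N : ℕ} (A : Matrix (Fin N) (Fin N) ℝ) :
    ∑ k, ((√N)⁻¹ • 1 ᵥ* A) k ^ 2 ≤ opNorm A ^ 2 := by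
  have h := Aᴴ.l2_opNorm_mulVec (WithLp.toLp 2 1)
  rw [Matrix.l2_opNorm_conjTranspose, EuclideanSpace.norm_eq, EuclideanSpace.norm_eq] at h
  have h2 := pow_le_pow_left₀ (Real.sqrt_nonneg _) h 2
  rw [mul_pow, Real.sq_sqrt (sum_nonneg fun _ _ => sq_nonneg _),
    Real.sq_sqrt (sum_nonneg fun _ _ => sq_nonneg _)] at h2
  have hcol : ∑ k, (1 ᵥ* A) k ^ 2 ≤ ‖A‖ ^ 2 * N := by
    simpa [Matrix.conjTranspose_eq_transpose_of_trivial, Matrix.mulVec_transpose] using h2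
  simp only [Pi.smul_apply, smul_eq_mul, inv_mul_eq_div, div_pow,
    Real.sq_sqrt (Nat.cast_nonneg N), ← sum_div]
  exact div_le_of_le_mul₀ (Nat.cast_nonneg N) (sq_nonneg _) hcol

section Panel

/-- The innovations `ε*_s` of the coupled process `Ū*`. -/
noncomputable def coupledNoise (ε ε' : (N : ℕ) → ℤ → Ω → Fin N → ℝ) (N : ℕ) (s : ℤ) (ω : Ω) :
    Fin N → ℝ :=
  fun l => if 1 ≤ s then ε N s ω l else ε' N s ω l

theorem hasSum_UbarLin_sub_UbarLinStar {Ω' : Type*} {ε ε' : (N : ℕ) → ℤ → Ω' → Fin N → ℝ} {N : ℕ}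
    (B : (N : ℕ) → ℕ → Matrix (Fin N) (Fin N) ℝ) (t : ℕ) (ω : Ω')
    (hsum : ∀ i, Summable fun j : ℕ => (B N j *ᵥ ε N (t - j) ω) i)
    (hsumStar : ∀ i, Summable fun j : ℕ => (B N j *ᵥ coupledNoise ε ε' N (t - j) ω) i) :
    HasSum (fun k : ℕ => ((√N)⁻¹ • 1 ᵥ* B N (k + t)) ⬝ᵥ (ε N (-k) ω - ε' N (-k) ω))
      (UbarLin ε B N t ω - UbarLinStar ε ε' B N t ω) := by
  have hU : HasSum (fun j : ℕ => (∑ i, (B N j *ᵥ ε N (t - j) ω) i) / √N) (UbarLin ε B N t ω) :=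
    (hasSum_sum fun i _ => (hsum i).hasSum).div_const _
  have hU' : HasSum (fun j : ℕ => (∑ i, (B N j *ᵥ coupledNoise ε ε' N (t - j) ω) i) / √N)
      (UbarLinStar ε ε' B N t ω) :=
    (hasSum_sum fun i _ => (hsumStar i).hasSum).div_const _
  have hdiff := hU.sub hU'
  simp_rw [← sub_div, ← one_dotProduct, ← dotProduct_sub, ← Matrix.mulVec_sub,
    Matrix.dotProduct_mulVec] at hdiff
  rw [← hasSum_nat_add_iff' t] at hdiff
  have hcancel : ∀ j ∈ range t, (1 ᵥ* B N j) ⬝ᵥ (ε N (t - j) ω - coupledNoise ε ε' N (t - j) ω)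
      / √N = 0 := by
    intro j hj
    have hcoupled : coupledNoise ε ε' N (t - j) ω = ε N (t - j) ω :=
      funext fun _ => if_pos (by have := mem_range.1 hj; omega)
    rw [hcoupled, sub_self, dotProduct_zero, zero_div]
  rw [sum_eq_zero hcancel, sub_zero] at hdiff
  refine hdiff.congr_fun fun k => ?_
  have hk : (t : ℤ) - ((k + t : ℕ) : ℤ) = -k := by push_cast; ring
  have hpast : coupledNoise ε ε' N (-k) ω = ε' N (-k) ω := funext fun _ => if_neg (by omega)
  rw [hk, hpast, smul_dotProduct, smul_eq_mul, inv_mul_eq_div]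

theorem eLpNorm_UbarLin_sub_UbarLinStar_le {ε ε' : (N : ℕ) → ℤ → Ω → Fin N → ℝ} {N : ℕ}
    {μ : Measure Ω} [IsProbabilityMeasure μ]
    {ν : Measure ℝ} [IsProbabilityMeasure ν] {B : (N : ℕ) → ℕ → Matrix (Fin N) (Fin N) ℝ}
    {C₀ ρ : ℝ} (hC₀ : 0 ≤ C₀) (hρ0 : 0 ≤ ρ) (hρ1 : ρ < 1)
    (hmeas : ∀ s, Measurable (ε N s)) (hmeas' : ∀ s, Measurable (ε' N s))
    (hindep : iIndepFun
      (fun p : (ℤ ⊕ ℤ) × Fin N => fun ω => Sum.elim (ε N) (ε' N) p.1 ω p.2) μ)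
    (hlaw : ∀ s i, μ.map (fun ω => ε N s ω i) = ν) (hlaw' : ∀ s i, μ.map (fun ω => ε' N s ω i) = ν)
    (hmean : ∫ x, x ∂ν = 0) (hmom4 : MemLp id 4 ν) (hB_op : ∀ j, opNorm (B N j) ≤ C₀ * ρ ^ j)
    (t : ℕ) (hsum : ∀ i, ∀ᵐ ω ∂μ, Summable fun j : ℕ => (B N j *ᵥ ε N (t - j) ω) i)
    (hsumStar : ∀ i, ∀ᵐ ω ∂μ,
      Summable fun j : ℕ => (B N j *ᵥ coupledNoise ε ε' N (t - j) ω) i) :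
    eLpNorm (fun ω => UbarLin ε B N t ω - UbarLinStar ε ε' B N t ω) 4 μ
      ≤ ENNReal.ofReal (2 * fourthMomentConst ν * C₀ / (1 - ρ) * ρ ^ t) := by
  have hcoord (s : ℤ) : iIndepFun (fun i ω => ε N s ω i) μ ∧ iIndepFun (fun i ω => ε' N s ω i) μ :=
    ⟨hindep.precomp (g := fun i => (Sum.inl s, i)) fun _ _ h => (Prod.ext_iff.1 h).2,
      hindep.precomp (g := fun i => (Sum.inr s, i)) fun _ _ h => (Prod.ext_iff.1 h).2⟩
  have hlag (k : ℕ) : eLpNorm (fun ω => ((√N)⁻¹ • 1 ᵥ* B N (k + t)) ⬝ᵥ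
      (ε N (-k) ω - ε' N (-k) ω)) 4 μ
      ≤ ENNReal.ofReal (2 * fourthMomentConst ν * C₀ * ρ ^ (k + t)) := by
    refine (eLpNorm_dotProduct_sub_le (hcoord _).1 (hcoord _).2 (hmeas _) (hmeas' _) (hlaw _)
      (hlaw' _) hmean hmom4 _ (opNorm_nonneg _) (sum_sq_smul_vecMul_one_le _)).trans
      (ENNReal.ofReal_le_ofReal ?_)
    calc 2 * (fourthMomentConst ν * opNorm (B N (k + t)))
        ≤ 2 * (fourthMomentConst ν * (C₀ * ρ ^ (k + t))) := by
          have := fourthMomentConst_nonneg ν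
          gcongr
          exact hB_op _
      _ = _ := by ring
  calc eLpNorm (fun ω => UbarLin ε B N t ω - UbarLinStar ε ε' B N t ω) 4 μ
      ≤ ∑' k : ℕ, eLpNorm (fun ω => ((√N)⁻¹ • 1 ᵥ* B N (k + t)) ⬝ᵥ
          (ε N (-k) ω - ε' N (-k) ω)) 4 μ := by
        refine eLpNorm_le_tsum_of_hasSum (by norm_num) (fun k => ?_) ?_
        · exact ((continuous_const.dotProduct continuous_id).measurable.comp
            ((hmeas _).sub (hmeas' _))).aestronglyMeasurable
        · filter_upwards [ae_all_iff.2 hsum, ae_all_iff.2 hsumStar] with ω h h'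
          exact hasSum_UbarLin_sub_UbarLinStar B t ω h h'
    _ ≤ ∑' k : ℕ, ENNReal.ofReal (2 * fourthMomentConst ν * C₀ * ρ ^ (k + t)) :=
        ENNReal.tsum_le_tsum hlag
    _ = _ := tsum_ofReal_mul_pow_add (by have := fourthMomentConst_nonneg ν; positivity) hρ0 hρ1 t

end Panel

/-- Example 1, part 1: under the operator-norm decay `‖B_j‖ ≤ C₀ρ^j` and
`E|ε₁₁|⁴ < ∞`, one has `‖Ū_t − Ū*_t‖_{L⁴} ≤ C ρ^t` for all `N ≥ 1`, `t ≥ 0`; hence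
`∑_t t² ‖Ū_t − Ū*_t‖_{L⁴} < ∞` uniformly in `N`, i.e. Assumption 1 holds with `δ = 4`. -/
theorem statement16 {Ω : Type*} [MeasurableSpace Ω] (μ : Measure Ω) [IsProbabilityMeasure μ]
    (ν : Measure ℝ) [IsProbabilityMeasure ν]
    (ε ε' : (N : ℕ) → ℤ → Ω → Fin N → ℝ)
    (B : (N : ℕ) → ℕ → Matrix (Fin N) (Fin N) ℝ)
    (C₀ ρ : ℝ) (hC₀ : 0 < C₀) (hρ0 : 0 < ρ) (hρ1 : ρ < 1)
    (hmeas : ∀ N t, Measurable (ε N t)) (hmeas' : ∀ N t, Measurable (ε' N t))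
    (hindep : ∀ N : ℕ, iIndepFun
      (fun p : (ℤ ⊕ ℤ) × Fin N => fun ω => Sum.elim (ε N) (ε' N) p.1 ω p.2) μ)
    (hlaw : ∀ N t i, Measure.map (fun ω => ε N t ω i) μ = ν)
    (hlaw' : ∀ N t i, Measure.map (fun ω => ε' N t ω i) μ = ν)
    (hmean : ∫ x, x ∂ν = 0)
    (hmom4 : MemLp id (4 : ℝ≥0∞) ν)
    (hB_op : ∀ N j, opNorm (B N j) ≤ C₀ * ρ ^ j)
    (hsum : ∀ N t i, ∀ᵐ ω ∂μ,
      Summable (fun j : ℕ => (B N j).mulVec (ε N (t - (j : ℤ)) ω) i))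
    (hsumStar : ∀ N t i, ∀ᵐ ω ∂μ,
      Summable (fun j : ℕ => (B N j).mulVec
        (fun l => if 1 ≤ t - (j : ℤ) then ε N (t - (j : ℤ)) ω l
          else ε' N (t - (j : ℤ)) ω l) i)) :
    ∃ C : ℝ, 0 < C ∧
      (∀ N : ℕ, 1 ≤ N → ∀ t : ℕ,
        eLpNorm (fun ω => UbarLin ε B N t ω - UbarLinStar ε ε' B N t ω) (4 : ℝ≥0∞) μ
          ≤ ENNReal.ofReal (C * ρ ^ t)) ∧
      ∃ M : ℝ, ∀ N : ℕ, 1 ≤ N →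
        ∑' t : ℕ, ((t : ℝ≥0∞)) ^ 2 *
            eLpNorm (fun ω => UbarLin ε B N t ω - UbarLinStar ε ε' B N t ω) (4 : ℝ≥0∞) μ
          ≤ ENNReal.ofReal M := by
  have hK := fourthMomentConst_nonneg ν
  -- the `+ 1` keeps `C` positive when `ε` vanishes
  set C := (2 * fourthMomentConst ν + 1) * C₀ / (1 - ρ)
  have hC : 0 < C := div_pos (by positivity) (by linarith)
  have hKC : 2 * fourthMomentConst ν * C₀ / (1 - ρ) ≤ C :=
    div_le_div_of_nonneg_right (mul_le_mul_of_nonneg_right (by linarith) hC₀.le) (by linarith)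
  have hbound (N t : ℕ) :
      eLpNorm (fun ω => UbarLin ε B N t ω - UbarLinStar ε ε' B N t ω) 4 μ
        ≤ ENNReal.ofReal (C * ρ ^ t) :=
    (eLpNorm_UbarLin_sub_UbarLinStar_le hC₀.le hρ0.le hρ1 (hmeas N) (hmeas' N) (hindep N)
      (hlaw N) (hlaw' N) hmean hmom4 (hB_op N) t (hsum N t) (hsumStar N t)).trans
      (ENNReal.ofReal_le_ofReal (mul_le_mul_of_nonneg_right hKC (pow_nonneg hρ0.le t)))
  exact ⟨C, hC, fun N _ t => hbound N t, _,
    fun N _ => tsum_sq_mul_le_of_le_geometric hC.le hρ0.le hρ1 (hbound N)⟩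

end PanelPaper
end

section
/- (Example 1, part 2, covariance summability: Bai's Assumption C(ii).) Assume the column-sum condition |B^{(N)}_j|₁ ≤ C₀ρ^j for all j ≥ 0 and E[ε₁₁²] < ∞. Then there exists a constant C (depending only on C₀, ρ and E[ε₁₁²]) such that for all N ≥ 1 and T ≥ 1: (1/(N·T)) · ∑_{i=1}^N ∑_{j=1}^N ∑_{t=1}^T ∑_{s=1}^T |E[u_{it} u_{js}]| ≤ C. -/
/-
Write `u_{it} = ∑_a (B_a ε_{t-a})_i`. Orthogonality of the noise coordinates gives
`E[(B_a ε_{t-a})_i (B_b ε_{s-b})_j] = σ² ∑_k (B_a)_{ik} (B_b)_{jk}` if `t - a = s - b` and `0`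
otherwise, where `σ² = E[ε₁₁²]`. By Cauchy–Schwarz and the geometric decay of the `B_a` the double
series of these products converges absolutely in `L¹`, so `E[u_{it} u_{js}]` is the sum of these
terms. Summing over `i, j` first, the column-sum bound gives at most `N σ² C₀² ρ^(a+b)` for each
pair `(a, b)`; the pairs with `a - b = t - s` then contribute `N σ² C₀² ρ^|t-s| / (1 - ρ²)`, and
`∑_{t,s ≤ T} ρ^|t-s| ≤ T (1 + ρ) / (1 - ρ)`.
-/

open MeasureTheory ProbabilityTheory Filter
open scoped ENNReal NNReal Topology Classical

namespace PanelPaper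

variable {Ω : Type*} [MeasurableSpace Ω]

lemma hasSum_ite_sub_eq_pow {ρ : ℝ} (hρ0 : 0 ≤ ρ) (hρ1 : ρ < 1) (d : ℤ) :
    HasSum (fun p : ℕ × ℕ => if (p.1 : ℤ) - p.2 = d then ρ ^ (p.1 + p.2) else 0)
      (ρ ^ d.natAbs * (1 - ρ ^ 2)⁻¹) := by
  -- the pairs with `p.1 - p.2 = d` are exactly `(m + d⁺, m + d⁻)`
  set diag : ℕ → ℕ × ℕ := fun m => (m + d.toNat, m + (-d).toNat)
  have hdiag : Function.Injective diag := fun m m' h => by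
    have := congrArg Prod.fst h
    simp only [diag] at this
    omega
  rw [← hdiag.hasSum_iff]
  · refine ((hasSum_geometric_of_lt_one (sq_nonneg ρ) (by nlinarith)).mul_left
      (ρ ^ d.natAbs)).congr_fun fun m => ?_
    simp only [Function.comp_apply, diag]
    rw [if_pos (by push_cast; omega), ← pow_mul, ← pow_add]
    congr 1
    omega
  · intro p hp
    refine if_neg fun h => hp ⟨min p.1 p.2, ?_⟩
    simp only [diag, Prod.ext_iff]
    omega

lemma hasSum_pow_natAbs {ρ : ℝ} (hρ0 : 0 ≤ ρ) (hρ1 : ρ < 1) :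
    HasSum (fun d : ℤ => ρ ^ d.natAbs) ((1 + ρ) / (1 - ρ)) := by
  have hpos := hasSum_geometric_of_lt_one hρ0 hρ1
  have hneg : HasSum (fun n : ℕ => ρ ^ (-((n : ℤ) + 1)).natAbs) (ρ * (1 - ρ)⁻¹) := by
    have hexp : ∀ n : ℕ, ρ ^ (-((n : ℤ) + 1)).natAbs = ρ * ρ ^ n := fun n => by
      rw [← pow_succ']
      congr 1
    simpa only [hexp] using hpos.mul_left ρ
  rw [show (1 + ρ) / (1 - ρ) = (1 - ρ)⁻¹ + ρ * (1 - ρ)⁻¹ by ring]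
  exact hpos.of_nat_of_neg_add_one hneg

lemma sum_pow_natAbs_sub_le {ρ : ℝ} (hρ0 : 0 ≤ ρ) (hρ1 : ρ < 1) (S : Finset ℤ) (t : ℤ) :
    ∑ s ∈ S, ρ ^ (t - s).natAbs ≤ (1 + ρ) / (1 - ρ) :=
  (Finset.sum_image (f := fun d : ℤ => ρ ^ d.natAbs) fun _ _ _ _ h => sub_right_injective h).symm
    |>.trans_le <| sum_le_hasSum _ (fun _ _ => by positivity) (hasSum_pow_natAbs hρ0 hρ1)

lemma sum_sum_pow_natAbs_sub_le {ρ : ℝ} (hρ0 : 0 ≤ ρ) (hρ1 : ρ < 1) (S : Finset ℤ) :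
    ∑ t ∈ S, ∑ s ∈ S, ρ ^ (t - s).natAbs ≤ S.card * ((1 + ρ) / (1 - ρ)) := by
  simpa using Finset.sum_le_card_nsmul S _ _ fun t _ => sum_pow_natAbs_sub_le hρ0 hρ1 S t

lemma sum_sum_abs_sum_mul_le {κ : Type*} [Fintype κ] {A A' : Matrix κ κ ℝ} {α β : ℝ}
    (hA : ∀ k, ∑ i, |A i k| ≤ α) (hA' : ∀ k, ∑ j, |A' j k| ≤ β) :
    ∑ i, ∑ j, |∑ k, A i k * A' j k| ≤ Fintype.card κ * (α * β) := by
  calc ∑ i, ∑ j, |∑ k, A i k * A' j k| ≤ ∑ i, ∑ j, ∑ k, |A i k| * |A' j k| := by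
        gcongr with i _ j _
        exact (Finset.abs_sum_le_sum_abs _ _).trans_eq (by simp only [abs_mul])
    _ = ∑ k, (∑ i, |A i k|) * ∑ j, |A' j k| := by
        simp only [Finset.sum_mul_sum]
        exact (Finset.sum_congr rfl fun _ _ => Finset.sum_comm).trans Finset.sum_comm
    _ ≤ ∑ _k : κ, α * β := Finset.sum_le_sum fun k _ => mul_le_mul (hA k) (hA' k)
        (Finset.sum_nonneg fun _ _ => abs_nonneg _)
        ((Finset.sum_nonneg fun _ _ => abs_nonneg _).trans (hA k))
    _ = Fintype.card κ * (α * β) := by simp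

section Probability

variable {μ : Measure Ω}

lemma integral_abs_mul_le_of_integral_sq_le {f g : Ω → ℝ} (hf : MemLp f 2 μ) (hg : MemLp g 2 μ)
    {K α β : ℝ} (hα : 0 < α) (hβ : 0 < β) (hfK : ∫ ω, f ω ^ 2 ∂μ ≤ K * α ^ 2)
    (hgK : ∫ ω, g ω ^ 2 ∂μ ≤ K * β ^ 2) :
    ∫ ω, |f ω * g ω| ∂μ ≤ K * (α * β) := by
  -- weighted AM-GM: `2αβ|fg| ≤ β²f² + α²g²`
  have hpt : ∀ ω, 2 * α * β * |f ω * g ω| ≤ β ^ 2 * f ω ^ 2 + α ^ 2 * g ω ^ 2 := fun ω => by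
    rw [abs_mul, ← sq_abs (f ω), ← sq_abs (g ω)]
    nlinarith [sq_nonneg (β * |f ω| - α * |g ω|)]
  have hint : Integrable (fun ω => |f ω * g ω|) μ := (hf.integrable_mul hg).abs
  have h : ∫ ω, 2 * α * β * |f ω * g ω| ∂μ ≤ ∫ ω, (β ^ 2 * f ω ^ 2 + α ^ 2 * g ω ^ 2) ∂μ :=
    integral_mono (hint.const_mul _)
      ((hf.integrable_sq.const_mul _).add (hg.integrable_sq.const_mul _)) hpt
  rw [integral_const_mul, integral_add (hf.integrable_sq.const_mul _)
    (hg.integrable_sq.const_mul _), integral_const_mul, integral_const_mul] at h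
  have hαβ : 0 < 2 * α * β := by positivity
  refine le_of_mul_le_mul_left (h.trans ?_) hαβ
  nlinarith [mul_le_mul_of_nonneg_left hfK (sq_nonneg β),
    mul_le_mul_of_nonneg_left hgK (sq_nonneg α)]

lemma hasSum_integral_mul_of_summable {ι ι' : Type*} [Countable ι] [Countable ι']
    {X : ι → Ω → ℝ} {Y : ι' → Ω → ℝ}
    (hX : ∀ᵐ ω ∂μ, Summable fun a => X a ω) (hY : ∀ᵐ ω ∂μ, Summable fun b => Y b ω)
    (hint : ∀ a b, Integrable (fun ω => X a ω * Y b ω) μ)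
    (hsum : Summable fun p : ι × ι' => ∫ ω, |X p.1 ω * Y p.2 ω| ∂μ) :
    HasSum (fun p : ι × ι' => ∫ ω, X p.1 ω * Y p.2 ω ∂μ)
      (∫ ω, (∑' a, X a ω) * (∑' b, Y b ω) ∂μ) := by
  have h := hasSum_integral_of_summable_integral_norm
    (F := fun (p : ι × ι') ω => X p.1 ω * Y p.2 ω) (fun p => hint p.1 p.2)
    (by simpa only [Real.norm_eq_abs] using hsum)
  have hprod : (fun ω => ∑' p : ι × ι', X p.1 ω * Y p.2 ω)
      =ᵐ[μ] fun ω => (∑' a, X a ω) * ∑' b, Y b ω := by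
    filter_upwards [hX, hY] with ω hXω hYω
    exact (tsum_mul_tsum_of_summable_norm (f := fun a => X a ω) (g := fun b => Y b ω)
      (by simpa only [Real.norm_eq_abs] using hXω.abs)
      (by simpa only [Real.norm_eq_abs] using hYω.abs)).symm
  rwa [integral_congr_ae hprod] at h

structure IsIIDWithLaw {ι : Type*} (μ : Measure Ω) (ν : Measure ℝ) (X : ι → Ω → ℝ) : Prop where
  measurable : ∀ p, Measurable (X p)
  indep : iIndepFun X μ
  map_eq : ∀ p, μ.map (X p) = ν

namespace IsIIDWithLaw

variable {ι : Type*} {ν : Measure ℝ} {X : ι → Ω → ℝ}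

lemma memLp_two (hX : IsIIDWithLaw μ ν X) (hν : MemLp id 2 ν) (p : ι) : MemLp (X p) 2 μ := by
  rw [← hX.map_eq p] at hν
  exact (memLp_map_measure_iff aestronglyMeasurable_id (hX.measurable p).aemeasurable).1 hν

lemma integral_mul (hX : IsIIDWithLaw μ ν X) (hmean : ∫ x, x ∂ν = 0) (p q : ι) :
    ∫ ω, X p ω * X q ω ∂μ = if p = q then ∫ x, x ^ 2 ∂ν else 0 := by
  split_ifs with hpq
  · subst hpq
    rw [← hX.map_eq p, integral_map (hX.measurable p).aemeasurable
      (continuous_pow 2).aestronglyMeasurable]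
    simp only [sq]
  · have hmean' : ∫ ω, X p ω ∂μ = 0 := by
      rwa [← hX.map_eq p, integral_map (hX.measurable p).aemeasurable
        continuous_id'.aestronglyMeasurable] at hmean
    have h := (hX.indep.indepFun hpq).integral_mul_eq_mul_integral
      (hX.measurable p).aestronglyMeasurable (hX.measurable q).aestronglyMeasurable
    simpa only [Pi.mul_apply, hmean', zero_mul] using h

lemma integral_sum_mul_sum (hX : IsIIDWithLaw μ ν X) (hmean : ∫ x, x ∂ν = 0)
    (hν : MemLp id 2 ν) {κ κ' : Type*} [Fintype κ] [Fintype κ'] (c : κ → ℝ) (d : κ' → ℝ)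
    (p : κ → ι) (q : κ' → ι) :
    ∫ ω, (∑ k, c k * X (p k) ω) * (∑ l, d l * X (q l) ω) ∂μ
      = (∫ x, x ^ 2 ∂ν) * ∑ k, ∑ l, if p k = q l then c k * d l else 0 := by
  have hint : ∀ k l, Integrable (fun ω => c k * d l * (X (p k) ω * X (q l) ω)) μ := fun k l =>
    ((hX.memLp_two hν (p k)).integrable_mul (hX.memLp_two hν (q l))).const_mul _
  simp_rw [Finset.sum_mul_sum, mul_mul_mul_comm (c _), Finset.mul_sum]
  rw [integral_finsetSum _ fun k _ => integrable_finsetSum _ fun l _ => hint k l]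
  refine Finset.sum_congr rfl fun k _ => ?_
  rw [integral_finsetSum _ fun l _ => hint k l]
  refine Finset.sum_congr rfl fun l _ => ?_
  rw [integral_const_mul, hX.integral_mul hmean]
  split_ifs <;> ring

end IsIIDWithLaw

variable {ν : Measure ℝ} {κ : Type*} [Fintype κ] {A : ℕ → Matrix κ κ ℝ} {e : ℤ → Ω → κ → ℝ}

def maTerm (A : ℕ → Matrix κ κ ℝ) (e : ℤ → Ω → κ → ℝ) (t : ℤ) (i : κ) (a : ℕ) (ω : Ω) : ℝ :=
  (A a).mulVec (e (t - a) ω) i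

lemma memLp_maTerm (hX : IsIIDWithLaw μ ν fun p : ℤ × κ => fun ω => e p.1 ω p.2)
    (hν : MemLp id 2 ν) (t : ℤ) (i : κ) (a : ℕ) : MemLp (maTerm A e t i a) 2 μ :=
  memLp_finsetSum _ fun k _ => (hX.memLp_two hν (t - a, k)).const_mul _

lemma integral_maTerm_mul (hX : IsIIDWithLaw μ ν fun p : ℤ × κ => fun ω => e p.1 ω p.2)
    (hmean : ∫ x, x ∂ν = 0) (hν : MemLp id 2 ν) (t s : ℤ) (i j : κ) (a b : ℕ) :
    ∫ ω, maTerm A e t i a ω * maTerm A e s j b ω ∂μ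
      = if t - a = s - b then (∫ x, x ^ 2 ∂ν) * ∑ k, A a i k * A b j k else 0 := by
  refine (hX.integral_sum_mul_sum hmean hν (A a i) (A b j) (fun k => (t - a, k))
    (fun l => (s - b, l))).trans ?_
  split_ifs with h <;> simp [h]

lemma integral_maTerm_sq_le (hX : IsIIDWithLaw μ ν fun p : ℤ × κ => fun ω => e p.1 ω p.2)
    (hmean : ∫ x, x ∂ν = 0) (hν : MemLp id 2 ν) {t : ℤ} {i : κ} {a : ℕ} {α : ℝ}
    (hA : ∀ k, |A a i k| ≤ α) :
    ∫ ω, maTerm A e t i a ω ^ 2 ∂μ ≤ ((∫ x, x ^ 2 ∂ν) * Fintype.card κ) * α ^ 2 := by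
  have hσ : 0 ≤ ∫ x, x ^ 2 ∂ν := integral_nonneg fun x => sq_nonneg x
  simp_rw [sq (maTerm A e t i a _)]
  rw [integral_maTerm_mul hX hmean hν, if_pos rfl, mul_assoc]
  refine mul_le_mul_of_nonneg_left ?_ hσ
  calc ∑ k, A a i k * A a i k ≤ ∑ _k : κ, α ^ 2 := Finset.sum_le_sum fun k _ => by
        rw [← sq, ← sq_abs]
        exact pow_le_pow_left₀ (abs_nonneg _) (hA k) 2
    _ = Fintype.card κ * α ^ 2 := by simp

lemma hasSum_integral_maTerm_mul (hX : IsIIDWithLaw μ ν fun p : ℤ × κ => fun ω => e p.1 ω p.2)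
    (hmean : ∫ x, x ∂ν = 0) (hν : MemLp id 2 ν) {C₀ ρ : ℝ} (hρ0 : 0 < ρ) (hρ1 : ρ < 1)
    (hA : ∀ a i k, |A a i k| ≤ C₀ * ρ ^ a) {t s : ℤ} {i j : κ}
    (hsum_t : ∀ᵐ ω ∂μ, Summable fun a => maTerm A e t i a ω)
    (hsum_s : ∀ᵐ ω ∂μ, Summable fun b => maTerm A e s j b ω) :
    HasSum (fun p : ℕ × ℕ => ∫ ω, maTerm A e t i p.1 ω * maTerm A e s j p.2 ω ∂μ)
      (∫ ω, (∑' a, maTerm A e t i a ω) * (∑' b, maTerm A e s j b ω) ∂μ) := by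
  set K := (∫ x, x ^ 2 ∂ν) * Fintype.card κ * C₀ ^ 2
  have hsq : ∀ τ k a, ∫ ω, maTerm A e τ k a ω ^ 2 ∂μ ≤ K * (ρ ^ a) ^ 2 := fun τ k a =>
    (integral_maTerm_sq_le hX hmean hν (hA a k)).trans_eq (by ring)
  have hgeo := summable_geometric_of_lt_one hρ0.le hρ1
  refine hasSum_integral_mul_of_summable hsum_t hsum_s
    (fun a b => (memLp_maTerm hX hν t i a).integrable_mul (memLp_maTerm hX hν s j b)) ?_
  refine ((hgeo.mul_of_nonneg hgeo (fun _ => by positivity) (fun _ => by positivity)).mul_left K)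
    |>.of_nonneg_of_le (fun _ => integral_nonneg fun _ => abs_nonneg _) fun p => ?_
  exact integral_abs_mul_le_of_integral_sq_le (memLp_maTerm hX hν t i p.1)
    (memLp_maTerm hX hν s j p.2) (by positivity) (by positivity) (hsq t i p.1) (hsq s j p.2)

lemma sum_sum_abs_integral_tsum_maTerm_mul_le
    (hX : IsIIDWithLaw μ ν fun p : ℤ × κ => fun ω => e p.1 ω p.2)
    (hmean : ∫ x, x ∂ν = 0) (hν : MemLp id 2 ν) {C₀ ρ : ℝ} (hρ0 : 0 < ρ) (hρ1 : ρ < 1)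
    (hA : ∀ a k, ∑ i, |A a i k| ≤ C₀ * ρ ^ a)
    (hsum : ∀ t i, ∀ᵐ ω ∂μ, Summable fun a => maTerm A e t i a ω) (t s : ℤ) :
    ∑ i, ∑ j, |∫ ω, (∑' a, maTerm A e t i a ω) * (∑' b, maTerm A e s j b ω) ∂μ|
      ≤ (∫ x, x ^ 2 ∂ν) * Fintype.card κ * C₀ ^ 2 * (ρ ^ (t - s).natAbs * (1 - ρ ^ 2)⁻¹) := by
  set σ2 := ∫ x, x ^ 2 ∂ν with hσ2_def
  have hσ2 : 0 ≤ σ2 := integral_nonneg fun x => sq_nonneg x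
  have hentry : ∀ a i k, |A a i k| ≤ C₀ * ρ ^ a := fun a i k =>
    (Finset.single_le_sum (fun i _ => abs_nonneg (A a i k)) (Finset.mem_univ i)).trans (hA a k)
  have hcov := fun i j => hasSum_integral_maTerm_mul hX hmean hν hρ0 hρ1 hentry
    (hsum t i) (hsum s j)
  have hG := (hasSum_ite_sub_eq_pow hρ0.le hρ1 (t - s)).mul_left (σ2 * Fintype.card κ * C₀ ^ 2)
  have hterm : ∀ p : ℕ × ℕ,
      ∑ i, ∑ j, |∫ ω, maTerm A e t i p.1 ω * maTerm A e s j p.2 ω ∂μ|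
        ≤ σ2 * Fintype.card κ * C₀ ^ 2
          * if (p.1 : ℤ) - p.2 = t - s then ρ ^ (p.1 + p.2) else 0 := by
    rintro ⟨a, b⟩
    simp only [integral_maTerm_mul hX hmean hν, ← hσ2_def]
    by_cases h : (a : ℤ) - b = t - s
    · simp only [if_pos h, if_pos (show t - a = s - b by omega), abs_mul, abs_of_nonneg hσ2,
        ← Finset.mul_sum]
      calc σ2 * ∑ i, ∑ j, |∑ k, A a i k * A b j k|
          ≤ σ2 * (Fintype.card κ * (C₀ * ρ ^ a * (C₀ * ρ ^ b))) :=
            mul_le_mul_of_nonneg_left (sum_sum_abs_sum_mul_le (hA a) (hA b)) hσ2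
        _ = _ := by ring
    · simp [h, show t - a ≠ s - b by omega]
  calc ∑ i, ∑ j, |∫ ω, (∑' a, maTerm A e t i a ω) * (∑' b, maTerm A e s j b ω) ∂μ|
      ≤ ∑ i, ∑ j, ∑' p : ℕ × ℕ, |∫ ω, maTerm A e t i p.1 ω * maTerm A e s j p.2 ω ∂μ| := by
        gcongr with i _ j _
        exact (hcov i j).norm_le_of_bounded (hcov i j).summable.abs.hasSum fun _ => le_rfl
    _ ≤ _ := hasSum_le hterm (hasSum_sum fun i _ => hasSum_sum fun j _ =>
        (hcov i j).summable.abs.hasSum) hG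

end Probability

theorem statement17_general {Ω : Type*} [MeasurableSpace Ω] (μ : Measure Ω)
    (ν : Measure ℝ)
    (ε : (N : ℕ) → ℤ → Ω → Fin N → ℝ)
    (B : (N : ℕ) → ℕ → Matrix (Fin N) (Fin N) ℝ)
    (C₀ ρ : ℝ) (hρ0 : 0 < ρ) (hρ1 : ρ < 1)
    (hmeas : ∀ N t, Measurable (ε N t))
    (hindep : ∀ N : ℕ, iIndepFun
      (fun p : ℤ × Fin N => fun ω => ε N p.1 ω p.2) μ)
    (hlaw : ∀ N t i, Measure.map (fun ω => ε N t ω i) μ = ν)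
    (hmean : ∫ x, x ∂ν = 0)
    (hmom2 : MemLp id (2 : ℝ≥0∞) ν)
    (hB_col : ∀ N j, ∀ l : Fin N, ∑ k : Fin N, |B N j k l| ≤ C₀ * ρ ^ j)
    (hsum : ∀ N t i, ∀ᵐ ω ∂μ,
      Summable (fun j : ℕ => (B N j).mulVec (ε N (t - (j : ℤ)) ω) i)) :
    ∃ C : ℝ, 0 < C ∧ ∀ N T : ℕ, 1 ≤ N → 1 ≤ T →
      (1 / ((N : ℝ) * T)) *
        ∑ i : Fin N, ∑ j : Fin N,
          ∑ t ∈ Finset.Icc (1 : ℤ) (T : ℤ), ∑ s ∈ Finset.Icc (1 : ℤ) (T : ℤ),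
            |∫ ω, uCoord ε B N t ω i * uCoord ε B N s ω j ∂μ| ≤ C := by
  set σ2 := ∫ x, x ^ 2 ∂ν
  have hσ2 : 0 ≤ σ2 := integral_nonneg fun x => sq_nonneg x
  have hρ2 : 0 < 1 - ρ ^ 2 := by nlinarith
  set D := σ2 * C₀ ^ 2 * (1 - ρ ^ 2)⁻¹ * ((1 + ρ) / (1 - ρ)) with hD_def
  have hD : 0 ≤ D := by
    have := sub_pos.2 hρ1
    positivity
  refine ⟨D + 1, by positivity, fun N T hN hT => ?_⟩
  have hX : IsIIDWithLaw μ ν fun p : ℤ × Fin N => fun ω => ε N p.1 ω p.2 :=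
    ⟨fun p => (measurable_pi_apply p.2).comp (hmeas N p.1), hindep N, fun p => hlaw N p.1 p.2⟩
  have hts : ∀ t s, ∑ i : Fin N, ∑ j : Fin N, |∫ ω, uCoord ε B N t ω i * uCoord ε B N s ω j ∂μ|
      ≤ N * (σ2 * C₀ ^ 2 * (1 - ρ ^ 2)⁻¹) * ρ ^ (t - s).natAbs := fun t s =>
    (sum_sum_abs_integral_tsum_maTerm_mul_le hX hmean hmom2 hρ0 hρ1 (hB_col N) (hsum N) t s
      ).trans_eq (by rw [Fintype.card_fin]; ring)
  simp_rw [Finset.sum_comm (s := (Finset.univ : Finset (Fin N))) (t := Finset.Icc (1 : ℤ) T)]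
  calc 1 / ((N : ℝ) * T) * ∑ t ∈ Finset.Icc (1 : ℤ) T, ∑ s ∈ Finset.Icc (1 : ℤ) T,
        ∑ i : Fin N, ∑ j : Fin N, |∫ ω, uCoord ε B N t ω i * uCoord ε B N s ω j ∂μ|
      ≤ 1 / ((N : ℝ) * T) * ∑ t ∈ Finset.Icc (1 : ℤ) T, ∑ s ∈ Finset.Icc (1 : ℤ) T,
        N * (σ2 * C₀ ^ 2 * (1 - ρ ^ 2)⁻¹) * ρ ^ (t - s).natAbs := by
        gcongr with t _ s _
        exact hts t s
    _ ≤ 1 / ((N : ℝ) * T) * (N * (σ2 * C₀ ^ 2 * (1 - ρ ^ 2)⁻¹)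
        * ((Finset.Icc (1 : ℤ) T).card * ((1 + ρ) / (1 - ρ)))) := by
        simp only [← Finset.mul_sum]
        gcongr
        exact sum_sum_pow_natAbs_sub_le hρ0.le hρ1 _
    _ = D := by
        rw [show (Finset.Icc (1 : ℤ) T).card = T by simp, hD_def]
        field_simp
    _ ≤ D + 1 := by linarith

/-- Example 1, part 2, Bai's Assumption C(ii): under the column-sum decay
`|B_j|₁ ≤ C₀ρ^j` and `E[ε₁₁²] < ∞`,
`(NT)⁻¹ ∑_{i,j=1}^N ∑_{t,s=1}^T |E[u_{it} u_{js}]| ≤ C` uniformly in `N, T`. -/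
theorem statement17 {Ω : Type*} [MeasurableSpace Ω] (μ : Measure Ω) [IsProbabilityMeasure μ]
    (ν : Measure ℝ) [IsProbabilityMeasure ν]
    (ε : (N : ℕ) → ℤ → Ω → Fin N → ℝ)
    (B : (N : ℕ) → ℕ → Matrix (Fin N) (Fin N) ℝ)
    (C₀ ρ : ℝ) (hC₀ : 0 < C₀) (hρ0 : 0 < ρ) (hρ1 : ρ < 1)
    (hmeas : ∀ N t, Measurable (ε N t))
    (hindep : ∀ N : ℕ, iIndepFun
      (fun p : ℤ × Fin N => fun ω => ε N p.1 ω p.2) μ)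
    (hlaw : ∀ N t i, Measure.map (fun ω => ε N t ω i) μ = ν)
    (hmean : ∫ x, x ∂ν = 0)
    (hmom2 : MemLp id (2 : ℝ≥0∞) ν)
    (hB_col : ∀ N j, ∀ l : Fin N, ∑ k : Fin N, |B N j k l| ≤ C₀ * ρ ^ j)
    (hsum : ∀ N t i, ∀ᵐ ω ∂μ,
      Summable (fun j : ℕ => (B N j).mulVec (ε N (t - (j : ℤ)) ω) i)) :
    ∃ C : ℝ, 0 < C ∧ ∀ N T : ℕ, 1 ≤ N → 1 ≤ T →
      (1 / ((N : ℝ) * T)) *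
        ∑ i : Fin N, ∑ j : Fin N,
          ∑ t ∈ Finset.Icc (1 : ℤ) (T : ℤ), ∑ s ∈ Finset.Icc (1 : ℤ) (T : ℤ),
            |∫ ω, uCoord ε B N t ω i * uCoord ε B N s ω j ∂μ| ≤ C :=
  statement17_general μ ν ε B C₀ ρ hρ0 hρ1 hmeas hindep hlaw hmean hmom2 hB_col hsum

end PanelPaper
end
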